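/- arXiv:2107.12935 — 4 statements merged into one kernel-verified Lean document; each statement's English description precedes it below -/
import Mathlib

section
/- Let D be a rooted digraph which is a quasi-vertex-flame and let L be a large spanning subdigraph of D. Then L is also a quasi-vertex-flame. -/
/-!
Common framework: a digraph on a vertex type `V` is given by its edge set
`D : Set (V × V)` (this automatically makes it simple in the sense of having
no parallel edges; absence of loops is the predicate `NoLoops`).
Paths are nonempty duplicate-free lists of vertices.
-/

universe u

variable {V : Type u}

/-- A (directed) path: a nonempty list of pairwise distinct vertices. -/
structure DiPath (V : Type u) where
  verts : List V
  ne : verts ≠ []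
  nodup : verts.Nodup

namespace DiPath

/-- The first vertex of a path. -/
def first (p : DiPath V) : V := p.verts.head p.ne

/-- The last vertex of a path. -/
def last (p : DiPath V) : V := p.verts.getLast p.ne

/-- The set of vertices of a path. -/
def vertexSet (p : DiPath V) : Set V := {x | x ∈ p.verts}

/-- The set of (directed) edges of a path. -/
def edges (p : DiPath V) : Set (V × V) := {e | e ∈ p.verts.zip p.verts.tail}

/-- The last edge of a path (`none` for a trivial path). -/
def lastEdge (p : DiPath V) : Option (V × V) := (p.verts.zip p.verts.tail).getLast?

/-- The internal vertices of a path. -/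
def internal (p : DiPath V) : Set V :=
  {x | x ∈ p.verts ∧ x ≠ p.first ∧ x ≠ p.last}

end DiPath

/-- `p` is a path of the digraph with edge set `D`: consecutive vertices are joined by
edges of `D`. -/
def IsPathIn (D : Set (V × V)) (p : DiPath V) : Prop :=
  List.Chain' (fun a b => (a, b) ∈ D) p.verts

/-- `V⁻(𝒫)`: the set of first vertices of the paths of a path-system. -/
def Vminus (P : Set (DiPath V)) : Set V := DiPath.first '' P

/-- `V⁺(𝒫)`: the set of last vertices of the paths of a path-system. -/
def Vplus (P : Set (DiPath V)) : Set V := DiPath.last '' P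

/-- `E⁺(𝒫)`: the set of last edges of the paths of a path-system. -/
def Eplus (P : Set (DiPath V)) : Set (V × V) := {e | ∃ p ∈ P, p.lastEdge = some e}

/-- `V(𝒫)`: the union of the vertex sets of the paths of a path-system. -/
def vertsOf (P : Set (DiPath V)) : Set V := ⋃ p ∈ P, p.vertexSet

/-- The union of the edge sets of the paths of a path-system. -/
def edgesOf (P : Set (DiPath V)) : Set (V × V) := ⋃ p ∈ P, p.edges

/-- `in_D(v)`: the ingoing edges of `v` in `D`. -/
def inEdges (D : Set (V × V)) (v : V) : Set (V × V) := {e ∈ D | e.2 = v}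

/-- `out_D(v)`: the outgoing edges of `v` in `D`. -/
def outEdges (D : Set (V × V)) (v : V) : Set (V × V) := {e ∈ D | e.1 = v}

/-- `N⁻_D(v)`: the in-neighbours of `v` in `D`. -/
def Nminus (D : Set (V × V)) (v : V) : Set V := {u | (u, v) ∈ D}

/-- A digraph is simple: it has no loops. -/
def NoLoops (D : Set (V × V)) : Prop := ∀ x, (x, x) ∉ D

/-- `r` is a root of `D`: it has no ingoing edges. -/
def IsRoot (D : Set (V × V)) (r : V) : Prop := ∀ u, (u, r) ∉ D

/-- An internally disjoint system of `r → v` paths in `D`. -/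
def IntDisjSys (D : Set (V × V)) (r v : V) (P : Set (DiPath V)) : Prop :=
  (∀ p ∈ P, IsPathIn D p ∧ p.first = r ∧ p.last = v) ∧
  (∀ p ∈ P, ∀ q ∈ P, p ≠ q → p.vertexSet ∩ q.vertexSet ⊆ {r, v})

/-- `𝒢_D(v)` (w.r.t. root `r`): the family of those `I ⊆ in_D(v)` for which some
internally disjoint system `𝒫` of `r → v` paths in `D` satisfies `E⁺(𝒫) = I`. -/
def GSet (D : Set (V × V)) (r v : V) : Set (Set (V × V)) :=
  {I | I ⊆ inEdges D v ∧ ∃ P, IntDisjSys D r v P ∧ Eplus P = I}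

/-- `D` has the vertex-flame property at `v`. -/
def FlameAt (D : Set (V × V)) (r v : V) : Prop := inEdges D v ∈ GSet D r v

/-- `D` has the quasi-vertex-flame property at `v`. -/
def QuasiFlameAt (D : Set (V × V)) (r v : V) : Prop :=
  ∀ I ⊆ inEdges D v, I.Finite → I ∈ GSet D r v

/-- `D` is a quasi-vertex-flame. -/
def QuasiFlame (D : Set (V × V)) (r : V) : Prop := ∀ v, v ≠ r → QuasiFlameAt D r v

/-- A strongly maximal internally disjoint system of `r → v` paths in `D`. -/
def StronglyMaximal (D : Set (V × V)) (r v : V) (P : Set (DiPath V)) : Prop :=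
  IntDisjSys D r v P ∧
  ∀ Q, IntDisjSys D r v Q → Cardinal.mk ↥(Q \ P) ≤ Cardinal.mk ↥(P \ Q)

/-- `L` is large w.r.t. `D` (rooted at `r`): for every `v ≠ r` some strongly maximal
internally disjoint `r → v` path-system of `D` lies in `L`. -/
def IsLarge (D L : Set (V × V)) (r : V) : Prop :=
  ∀ v, v ≠ r → ∃ P, StronglyMaximal D r v P ∧ ∀ p ∈ P, IsPathIn L p

/-- A `v`-fan: a system of paths of `D` starting at `v` and pairwise sharing only `v`. -/
def Fan (D : Set (V × V)) (v : V) (P : Set (DiPath V)) : Prop :=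
  (∀ p ∈ P, IsPathIn D p ∧ p.first = v) ∧
  (∀ p ∈ P, ∀ q ∈ P, p ≠ q → p.vertexSet ∩ q.vertexSet = {v})

/-- A `v`-infan: a system of paths of `D` ending at `v` and pairwise sharing only `v`. -/
def Infan (D : Set (V × V)) (v : V) (P : Set (DiPath V)) : Prop :=
  (∀ p ∈ P, IsPathIn D p ∧ p.last = v) ∧
  (∀ p ∈ P, ∀ q ∈ P, p ≠ q → p.vertexSet ∩ q.vertexSet = {v})

/-- `X` is linked from `v` in `D`. -/
def LinkedFrom (D : Set (V × V)) (v : V) (X : Set V) : Prop :=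
  ∃ P, Fan D v P ∧ Vplus P = X

/-- `X` is linked to `v` in `D`. -/
def LinkedTo (D : Set (V × V)) (v : V) (X : Set V) : Prop :=
  ∃ P, Infan D v P ∧ Vminus P = X

/-- A path-system `P` is orthogonal to `S`: `S` is obtained by choosing exactly one
internal vertex from each path of `P`. -/
def Orthogonal (P : Set (DiPath V)) (S : Set V) : Prop :=
  ∃ f : DiPath V → V, (∀ p ∈ P, f p ∈ p.internal) ∧ Set.InjOn f P ∧ f '' P = S

/-- `𝔓_D(v,S)`: internally disjoint `r → v` path-systems in `D` orthogonal to `S`. -/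
def EMsys (D : Set (V × V)) (r v : V) (S : Set V) : Set (Set (DiPath V)) :=
  {P | IntDisjSys D r v P ∧ Orthogonal P S}

/-- `S` separates `v` from `r` in `D`: every `r → v` path of `D` meets `S`. -/
def SeparatesRV (D : Set (V × V)) (r v : V) (S : Set V) : Prop :=
  ∀ p : DiPath V, IsPathIn D p → p.first = r → p.last = v → ∃ s ∈ S, s ∈ p.verts

/-- `𝔖_D(v)`: the Erdős–Menger separations between `r` and `v`. -/
def EMSep (D : Set (V × V)) (r v : V) : Set (Set V) :=
  {S | S ⊆ {x | x ≠ r ∧ x ≠ v} ∧ SeparatesRV (D \ {(r, v)}) r v S ∧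
    (EMsys D r v S).Nonempty}

/-- `D ↾_v I`: delete the ingoing edges of `v` that are neither in `I` nor equal to `rv`. -/
def restrictIn (D : Set (V × V)) (r v : V) (I : Set (V × V)) : Set (V × V) :=
  {e ∈ D | e.2 = v → (e ∈ I ∨ e = (r, v))}

/-- `ent_D(X)`: the entrance of `X`. -/
def ent (D : Set (V × V)) (X : Set V) : Set V :=
  {v ∈ X | ∃ u, u ∉ X ∧ (u, v) ∈ D}

/-- `int_D(X)`: the interior of `X`. -/
def intD (D : Set (V × V)) (X : Set V) : Set V := X \ ent D X

/-- The edge set of the induced subdigraph `D[B]`. -/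
def induceE (D : Set (V × V)) (B : Set V) : Set (V × V) :=
  {e ∈ D | e.1 ∈ B ∧ e.2 ∈ B}

/-- `B ⊆ V − r` is a `v`-bubble in `D`: there is a `v`-infan `{P_u : u ∈ ent_D(B) − v}`
in `D[B]` where `P_u` starts at `u`. -/
def IsBubble (D : Set (V × V)) (r v : V) (B : Set V) : Prop :=
  B ⊆ {x | x ≠ r} ∧ ∃ P, Infan (induceE D B) v P ∧ Vminus P = ent D B \ {v}

/-- `B_{D,v}`: the union of all `v`-bubbles of `D` (the largest `v`-bubble, when it exists). -/
def maxBubble (D : Set (V × V)) (r v : V) : Set V := ⋃₀ {B | IsBubble D r v B}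

/-- An anti-bubble of `D`: a set `A ⊆ V − r` whose entrance is linked from `r` in `D`. -/
def AntiBubble (D : Set (V × V)) (r : V) (A : Set V) : Prop :=
  A ⊆ {x | x ≠ r} ∧ LinkedFrom D r (ent D A)

/-- `A_{D,v}`: the intersection of all anti-bubbles of `D` containing `{v} ∪ N⁻_{D−rv}(v)`. -/
def Acap (D : Set (V × V)) (r v : V) : Set V :=
  ⋂₀ {A | AntiBubble D r A ∧ insert v (Nminus (D \ {(r, v)}) v) ⊆ A}

/-- `T_{D,v} := ent_{D−rv}(A_{D,v})`. -/
def Tsep (D : Set (V × V)) (r v : V) : Set V := ent (D \ {(r, v)}) (Acap D r v)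

/-- `S_{L,v} := ent_{L−rv}(B_{L,v})`. -/
def Ssep (L : Set (V × V)) (r v : V) : Set V := ent (L \ {(r, v)}) (maxBubble L r v)

/-- An `X → Y` path: exactly its first vertex lies in `X` and exactly its last vertex in `Y`. -/
def XYPath (X Y : Set V) (p : DiPath V) : Prop :=
  p.vertexSet ∩ X = {p.first} ∧ p.vertexSet ∩ Y = {p.last}

/-- A system of pairwise vertex-disjoint `X → Y` paths in `D`. -/
def DisjSys (D : Set (V × V)) (X Y : Set V) (P : Set (DiPath V)) : Prop :=
  (∀ p ∈ P, IsPathIn D p ∧ XYPath X Y p) ∧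
  (∀ p ∈ P, ∀ q ∈ P, p ≠ q → Disjoint p.vertexSet q.vertexSet)

/-- The vertex list of `P v Q`: the initial segment of `P` up to `v` followed by the
terminal segment of `Q` from `v`. -/
def spliceVerts [DecidableEq V] (p q : DiPath V) (v : V) : List V :=
  p.verts.takeWhile (fun x => decide (x ≠ v)) ++ q.verts.dropWhile (fun x => decide (x ≠ v))

/-! ### Auxiliary lemmas for the main theorem -/

section ProofAux

variable {V : Type u}

private lemma aux_rel_of_mem_zip_tail {R : V → V → Prop} :
    ∀ {l : List V}, l.Chain' R → ∀ {a b : V}, (a, b) ∈ l.zip l.tail → R a b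
  | [], _, _, _, h => by simp at h
  | [_], _, _, _, h => by simp at h
  | x :: y :: t, hc, a, b, h => by
    change List.IsChain R (x :: y :: t) at hc; rw [List.isChain_cons_cons] at hc
    simp only [List.tail_cons, List.zip_cons_cons, List.mem_cons, Prod.mk.injEq] at h
    rcases h with ⟨rfl, rfl⟩ | h
    · exact hc.1
    · exact aux_rel_of_mem_zip_tail hc.2 h

private lemma aux_mem_of_getLast? {l : List V} {a : V} (h : l.getLast? = some a) : a ∈ l := by
  cases l with
  | nil => simp at h
  | cons x t =>
    rw [List.getLast?_eq_getLast (l := x :: t) (by simp)] at h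
    have := List.getLast_mem (l := x :: t) (by simp)
    rwa [Option.some.inj h] at this

private lemma aux_getLast?_zip_tail :
    ∀ {l : List V} {x y : V}, l.dropLast.getLast? = some x → l.getLast? = some y →
      (l.zip l.tail).getLast? = some (x, y)
  | [], x, y, hx, hy => by simp at hy
  | [a], x, y, hx, hy => by simp at hx
  | a :: b :: t, x, y, hx, hy => by
    cases t with
    | nil =>
      simp only [List.dropLast_cons₂, List.dropLast_singleton, List.getLast?_singleton,
        Option.some.injEq] at hx
      simp only [List.getLast?_cons_cons, List.getLast?_singleton, Option.some.injEq] at hy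
      subst hx; subst hy
      rfl
    | cons c t' =>
      have hx' : (b :: c :: t').dropLast.getLast? = some x := by
        have e1 : (a :: b :: c :: t').dropLast = a :: b :: (c :: t').dropLast := rfl
        have e2 : (b :: c :: t').dropLast = b :: (c :: t').dropLast := rfl
        rw [e1, List.getLast?_cons_cons] at hx
        rw [e2]
        exact hx
      have hy' : (b :: c :: t').getLast? = some y := by
        rwa [List.getLast?_cons_cons] at hy
      have ih := aux_getLast?_zip_tail hx' hy'
      have e3 : (a :: b :: c :: t').zip (a :: b :: c :: t').tail
          = (a, b) :: ((b :: c :: t').zip (b :: c :: t').tail) := rfl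
      rw [e3]
      have e4 : (b :: c :: t').zip (b :: c :: t').tail
          = (b, c) :: ((c :: t').zip (c :: t').tail) := rfl
      rw [e4] at ih ⊢
      rwa [List.getLast?_cons_cons]

private lemma aux_getLast_ne_head {l : List V} (hn : l.Nodup) (h2 : 2 ≤ l.length)
    (ha : l ≠ []) : l.getLast ha ≠ l.head ha := by
  match l with
  | a :: t =>
    have ht : t ≠ [] := by
      cases t with
      | nil => simp at h2
      | cons _ _ => simp
    rw [List.getLast_cons ht, List.head_cons]
    intro hEq
    have hmem : t.getLast ht ∈ t := List.getLast_mem ht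
    rw [hEq] at hmem
    exact (List.nodup_cons.mp hn).1 hmem

private lemma aux_head_dropLast {l : List V} (h2 : 2 ≤ l.length) (h1 : l.dropLast ≠ [])
    (h0 : l ≠ []) : l.dropLast.head h1 = l.head h0 := by
  match l with
  | a :: b :: t => rfl

private lemma aux_last_not_mem_dropLast (p : DiPath V) : p.last ∉ p.verts.dropLast := by
  have h := List.dropLast_append_getLast p.ne
  have hn := p.nodup
  rw [← h] at hn
  rw [List.nodup_append] at hn
  intro hmem
  exact hn.2.2 _ hmem _ (List.mem_singleton_self _) rfl

namespace DiPath

private lemma aux_ext' {p q : DiPath V} (h : p.verts = q.verts) : p = q := by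
  cases p; cases q; simpa using h

private lemma aux_first_mem (p : DiPath V) : p.first ∈ p.verts := List.head_mem _
private lemma aux_last_mem (p : DiPath V) : p.last ∈ p.verts := List.getLast_mem _

private lemma aux_first_mem_vs (p : DiPath V) : p.first ∈ p.vertexSet := p.aux_first_mem
private lemma aux_last_mem_vs (p : DiPath V) : p.last ∈ p.vertexSet := p.aux_last_mem

private lemma aux_first_eq_last {p : DiPath V} (h : p.verts.length = 1) :
    p.first = p.last := by
  obtain ⟨a, ha⟩ := List.length_eq_one_iff.mp h
  simp [DiPath.first, DiPath.last, ha]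

private lemma aux_first_ne_last {p : DiPath V} (h2 : 2 ≤ p.verts.length) :
    p.first ≠ p.last :=
  fun h => (aux_getLast_ne_head p.nodup h2 p.ne) h.symm

private lemma aux_lastEdge_spec {p : DiPath V} (h2 : 2 ≤ p.verts.length) :
    ∃ x, p.lastEdge = some (x, p.last) ∧ p.verts.dropLast.getLast? = some x := by
  have h1 : p.verts.dropLast ≠ [] := by
    intro hc
    have := List.length_dropLast (xs := p.verts)
    rw [hc] at this
    simp at this
    omega
  refine ⟨p.verts.dropLast.getLast h1, ?_, (List.getLast?_eq_getLast h1)⟩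
  show (p.verts.zip p.verts.tail).getLast? = _
  exact aux_getLast?_zip_tail (List.getLast?_eq_getLast h1) (List.getLast?_eq_getLast p.ne)

private lemma aux_lastEdge_none {p : DiPath V} (h : p.verts.length = 1) :
    p.lastEdge = none := by
  obtain ⟨a, ha⟩ := List.length_eq_one_iff.mp h
  show (p.verts.zip p.verts.tail).getLast? = none
  rw [ha]
  rfl

private lemma aux_lastEdge_two_le {p : DiPath V} {e : V × V} (h : p.lastEdge = some e) :
    2 ≤ p.verts.length := by
  by_contra hc
  have h0 : 0 < p.verts.length := List.length_pos_iff.mpr p.ne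
  have h1 : p.verts.length = 1 := by omega
  rw [aux_lastEdge_none h1] at h
  simp at h

private lemma aux_lastEdge_parts {p : DiPath V} {e : V × V} (h : p.lastEdge = some e) :
    e.2 = p.last ∧ p.verts.dropLast.getLast? = some e.1 := by
  obtain ⟨x, hx1, hx2⟩ := aux_lastEdge_spec (aux_lastEdge_two_le h)
  rw [h] at hx1
  obtain ⟨h1, h2⟩ := Prod.mk.injEq _ _ _ _ ▸ (Option.some.inj hx1)
  exact ⟨h2, by rw [h1]; exact hx2⟩

private lemma aux_lastEdge_mem_edges {p : DiPath V} {e : V × V} (h : p.lastEdge = some e) :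
    e ∈ p.edges :=
  aux_mem_of_getLast? h

private lemma aux_edges_subset {E : Set (V × V)} {p : DiPath V} (hp : IsPathIn E p) :
    p.edges ⊆ E := by
  rintro ⟨a, b⟩ he
  exact aux_rel_of_mem_zip_tail hp he

/-- Path obtained by dropping the last vertex. -/
private def auxDropLast (p : DiPath V) (h2 : 2 ≤ p.verts.length) : DiPath V :=
  ⟨p.verts.dropLast,
    by
      intro hc
      have := List.length_dropLast (xs := p.verts)
      rw [hc] at this
      simp at this
      omega,
    p.nodup.sublist (List.dropLast_sublist _)⟩

private lemma auxDropLast_first {p : DiPath V} (h2 : 2 ≤ p.verts.length) :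
    (p.auxDropLast h2).first = p.first :=
  aux_head_dropLast h2 _ _

private lemma auxDropLast_last {p : DiPath V} {h2 : 2 ≤ p.verts.length} {x : V}
    (hx : p.verts.dropLast.getLast? = some x) : (p.auxDropLast h2).last = x := by
  have := List.getLast?_eq_getLast (l := p.verts.dropLast) (p.auxDropLast h2).ne
  rw [this] at hx
  exact Option.some.inj hx

private lemma auxDropLast_isPath {E : Set (V × V)} {p : DiPath V}
    (hp : IsPathIn E p) (h2 : 2 ≤ p.verts.length) : IsPathIn E (p.auxDropLast h2) :=
  hp.prefix (List.dropLast_prefix _)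

private lemma auxDropLast_subset {p : DiPath V} (h2 : 2 ≤ p.verts.length) :
    (p.auxDropLast h2).vertexSet ⊆ p.vertexSet :=
  fun _ hx => (List.dropLast_sublist _).subset hx

private lemma auxDropLast_length {p : DiPath V} (h2 : 2 ≤ p.verts.length) :
    (p.auxDropLast h2).verts.length = p.verts.length - 1 :=
  List.length_dropLast

private lemma aux_last_not_mem_auxDropLast {p : DiPath V} (h2 : 2 ≤ p.verts.length) :
    p.last ∉ (p.auxDropLast h2).vertexSet :=
  aux_last_not_mem_dropLast p

/-- Path obtained by appending one new vertex. -/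
private def auxSnoc (p : DiPath V) (t : V) (h : t ∉ p.verts) : DiPath V :=
  ⟨p.verts ++ [t], by simp, by
    rw [List.nodup_append]
    exact ⟨p.nodup, List.nodup_singleton t,
      fun a ha b hb hab => h (by rw [List.mem_singleton.mp hb] at hab; exact hab ▸ ha)⟩⟩

private lemma aux_head_append {l : List V} (t : V) (h : l ≠ []) (h2 : l ++ [t] ≠ []) :
    (l ++ [t]).head h2 = l.head h := by
  cases l with
  | nil => exact absurd rfl h
  | cons a m => rfl

private lemma auxSnoc_first {p : DiPath V} {t : V} (h : t ∉ p.verts) :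
    (p.auxSnoc t h).first = p.first :=
  aux_head_append t p.ne _

private lemma auxSnoc_last {p : DiPath V} {t : V} (h : t ∉ p.verts) :
    (p.auxSnoc t h).last = t := by
  show (p.verts ++ [t]).getLast _ = t
  exact List.getLast_concat

private lemma auxSnoc_vertexSet {p : DiPath V} {t : V} (h : t ∉ p.verts) :
    (p.auxSnoc t h).vertexSet = p.vertexSet ∪ {t} := by
  ext x
  simp only [auxSnoc, DiPath.vertexSet, Set.mem_setOf_eq, List.mem_append,
    List.mem_singleton, Set.mem_union, Set.mem_singleton_iff]

private lemma auxSnoc_isPath {E : Set (V × V)} {p : DiPath V} {t : V} (h : t ∉ p.verts)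
    (hp : IsPathIn E p) (he : (p.last, t) ∈ E) : IsPathIn E (p.auxSnoc t h) := by
  show List.IsChain _ (p.verts ++ [t])
  rw [List.isChain_append]
  refine ⟨hp, List.isChain_singleton t, ?_⟩
  intro x hx y hy
  rw [List.getLast?_eq_getLast p.ne, Option.mem_def] at hx
  simp only [List.head?_cons, Option.mem_def, Option.some.injEq] at hy
  rw [← Option.some.inj hx, ← hy]
  exact he

private lemma auxSnoc_lastEdge {p : DiPath V} {t : V} (h : t ∉ p.verts) :
    (p.auxSnoc t h).lastEdge = some (p.last, t) := by
  have h2 : 2 ≤ (p.auxSnoc t h).verts.length := by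
    show 2 ≤ (p.verts ++ [t]).length
    have := List.length_pos_iff.mpr p.ne
    simp
    omega
  obtain ⟨x, hx1, hx2⟩ := aux_lastEdge_spec h2
  have hdl : (p.auxSnoc t h).verts.dropLast = p.verts := by
    show (p.verts ++ [t]).dropLast = p.verts
    exact List.dropLast_concat
  rw [hdl, List.getLast?_eq_getLast p.ne] at hx2
  rw [hx1, auxSnoc_last h, ← Option.some.inj hx2]
  rfl

end DiPath

end ProofAux

section ProofAux2

variable {V : Type u} {D L : Set (V × V)} {r v : V} {P Q : Set (DiPath V)}

private lemma aux_sys_two_le (hP : IntDisjSys D r v P) (hrv : v ≠ r)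
    {p : DiPath V} (hp : p ∈ P) : 2 ≤ p.verts.length := by
  obtain ⟨_, hf, hl⟩ := hP.1 p hp
  by_contra h
  have h0 : 0 < p.verts.length := List.length_pos_iff.mpr p.ne
  have h1 : p.verts.length = 1 := by omega
  have := DiPath.aux_first_eq_last h1
  rw [hf, hl] at this
  exact hrv this.symm

private lemma aux_sys_lastEdge (hP : IntDisjSys D r v P) (hrv : v ≠ r)
    {p : DiPath V} (hp : p ∈ P) :
    ∃ x, p.lastEdge = some (x, v) ∧ (x, v) ∈ D := by
  obtain ⟨hpath, hf, hl⟩ := hP.1 p hp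
  obtain ⟨x, hx1, hx2⟩ := DiPath.aux_lastEdge_spec (aux_sys_two_le hP hrv hp)
  rw [hl] at hx1
  exact ⟨x, hx1, DiPath.aux_edges_subset hpath (DiPath.aux_lastEdge_mem_edges hx1)⟩

private lemma aux_lastEdge_injOn (hP : IntDisjSys D r v P) (hrv : v ≠ r) :
    ∀ p ∈ P, ∀ q ∈ P, p.lastEdge = q.lastEdge → p = q := by
  have key : ∀ p ∈ P, ∀ x : V, p.lastEdge = some (x, v) → x = r → p.verts = [r, v] := by
    intro p hp x hx hxr
    obtain ⟨hpath, hf, hl⟩ := hP.1 p hp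
    have h2 : 2 ≤ p.verts.length := DiPath.aux_lastEdge_two_le hx
    have hparts := DiPath.aux_lastEdge_parts hx
    have hdl : p.verts.dropLast ≠ [] := (p.auxDropLast h2).ne
    have hlast : p.verts.dropLast.getLast hdl = r := by
      have := List.getLast?_eq_getLast (l := p.verts.dropLast) hdl
      rw [this] at hparts
      have h5 := Option.some.inj hparts.2
      exact h5.trans hxr
    have hhead : p.verts.dropLast.head hdl = r := by
      rw [aux_head_dropLast h2 hdl p.ne]
      exact hf
    have hn : p.verts.dropLast.Nodup := p.nodup.sublist (List.dropLast_sublist _)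
    have hlen1 : p.verts.dropLast.length = 1 := by
      by_contra hc
      have h0 : 0 < p.verts.dropLast.length := List.length_pos_iff.mpr hdl
      have h2' : 2 ≤ p.verts.dropLast.length := by omega
      exact aux_getLast_ne_head hn h2' hdl (hlast.trans hhead.symm)
    obtain ⟨a, ha⟩ := List.length_eq_one_iff.mp hlen1
    have har : a = r := by
      have hgl : p.verts.dropLast.getLast? = some r := by
        rw [List.getLast?_eq_getLast hdl, hlast]
      rw [ha] at hgl
      simpa using hgl
    calc p.verts = p.verts.dropLast ++ [p.verts.getLast p.ne] :=
          (List.dropLast_append_getLast p.ne).symm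
      _ = [r, v] := by
          rw [ha, har, show p.verts.getLast p.ne = v from hl]
          rfl
  intro p hp q hq h
  by_contra hne
  obtain ⟨x, hx, _⟩ := aux_sys_lastEdge hP hrv hp
  obtain ⟨x', hx', _⟩ := aux_sys_lastEdge hP hrv hq
  rw [hx, hx'] at h
  have hxx : x = x' := by
    have := Option.some.inj h
    exact (Prod.mk.injEq _ _ _ _ ▸ this).1
  subst hxx
  -- x belongs to both paths
  have hxp : x ∈ p.vertexSet := by
    have := (DiPath.aux_lastEdge_parts hx).2
    exact (List.dropLast_sublist _).subset (aux_mem_of_getLast? this)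
  have hxq : x ∈ q.vertexSet := by
    have := (DiPath.aux_lastEdge_parts hx').2
    exact (List.dropLast_sublist _).subset (aux_mem_of_getLast? this)
  have hmem := hP.2 p hp q hq hne ⟨hxp, hxq⟩
  have hxv : x ≠ v := by
    intro hc
    have := (DiPath.aux_lastEdge_parts hx).2
    have hmem2 : x ∈ p.verts.dropLast := aux_mem_of_getLast? this
    have hlv : p.last = v := (hP.1 p hp).2.2
    rw [hc, ← hlv] at hmem2
    exact aux_last_not_mem_dropLast p hmem2
  have hxr : x = r := by
    rcases hmem with h | h
    · exact h
    · exact absurd (Set.mem_singleton_iff.mp h) hxv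
  have hpv : p.verts = [r, v] := key p hp x hx hxr
  have hqv : q.verts = [r, v] := key q hq x hx' hxr
  exact hne (DiPath.aux_ext' (hpv.trans hqv.symm))

private lemma aux_eplus_subset_inEdges (hP : IntDisjSys D r v P) (hrv : v ≠ r) :
    Eplus P ⊆ inEdges D v := by
  rintro e ⟨p, hp, hpe⟩
  obtain ⟨x, hx, hxD⟩ := aux_sys_lastEdge hP hrv hp
  rw [hx] at hpe
  rw [← Option.some.inj hpe]
  exact ⟨hxD, rfl⟩

private lemma aux_image_lastEdge_eq (hP : IntDisjSys D r v P) (hrv : v ≠ r) :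
    DiPath.lastEdge '' P = some '' Eplus P := by
  ext o
  constructor
  · rintro ⟨p, hp, rfl⟩
    obtain ⟨x, hx, _⟩ := aux_sys_lastEdge hP hrv hp
    exact ⟨(x, v), ⟨p, hp, hx⟩, hx.symm⟩
  · rintro ⟨e, ⟨p, hp, hpe⟩, rfl⟩
    exact ⟨p, hp, hpe⟩

private lemma aux_eplus_finite_iff (hP : IntDisjSys D r v P) (hrv : v ≠ r) :
    (Eplus P).Finite ↔ P.Finite := by
  constructor
  · intro h
    have h1 : (DiPath.lastEdge '' P).Finite := by
      rw [aux_image_lastEdge_eq hP hrv]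
      exact h.image _
    exact Set.Finite.of_finite_image h1
      (fun p hp q hq h' => aux_lastEdge_injOn hP hrv p hp q hq h')
  · intro h
    have h1 : (some '' Eplus P).Finite := by
      rw [← aux_image_lastEdge_eq hP hrv]
      exact h.image _
    exact Set.Finite.of_finite_image h1 (Option.some_injective _).injOn

private lemma aux_eplus_ncard (hP : IntDisjSys D r v P) (hrv : v ≠ r) :
    (Eplus P).ncard = P.ncard := by
  have h1 : (DiPath.lastEdge '' P).ncard = P.ncard :=
    Set.ncard_image_of_injOn (fun p hp q hq h' => aux_lastEdge_injOn hP hrv p hp q hq h')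
  have h2 : (some '' Eplus P).ncard = (Eplus P).ncard :=
    Set.ncard_image_of_injective _ (Option.some_injective _)
  rw [← h2, ← aux_image_lastEdge_eq hP hrv, h1]

private lemma aux_ncard_le_of_smax (hsm : StronglyMaximal D r v P) (hfin : P.Finite)
    (hQ : IntDisjSys D r v Q) (hQfin : Q.Finite) : Q.ncard ≤ P.ncard := by
  have hc := hsm.2 Q hQ
  have hPQ : (P \ Q).Finite := hfin.diff
  have hQP : (Q \ P).Finite := hQfin.diff
  have h1 : (Q \ P).ncard ≤ (P \ Q).ncard := by
    have h2 := Cardinal.toNat_le_toNat hc hPQ.lt_aleph0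
    have e1 : (Cardinal.mk ↥(Q \ P)).toNat = (Q \ P).ncard := Nat.card_coe_set_eq _
    have e2 : (Cardinal.mk ↥(P \ Q)).toNat = (P \ Q).ncard := Nat.card_coe_set_eq _
    rw [e1, e2] at h2
    exact h2
  have e1 : (Q ∩ P).ncard + (Q \ P).ncard = Q.ncard :=
    Set.ncard_inter_add_ncard_diff_eq_ncard Q P hQfin
  have e2 : (P ∩ Q).ncard + (P \ Q).ncard = P.ncard :=
    Set.ncard_inter_add_ncard_diff_eq_ncard P Q hfin
  rw [Set.inter_comm] at e1
  omega

private lemma aux_poor_full (hrv : v ≠ r) (hqf : QuasiFlameAt D r v)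
    (hsm : StronglyMaximal D r v P) (hfin : P.Finite) : inEdges D v ⊆ Eplus P := by
  intro e he
  by_contra hne
  have hP := hsm.1
  have hEfin : (Eplus P).Finite := (aux_eplus_finite_iff hP hrv).mpr hfin
  have hJsub : insert e (Eplus P) ⊆ inEdges D v := by
    intro f hf
    rcases Set.mem_insert_iff.mp hf with rfl | hf
    · exact he
    · exact aux_eplus_subset_inEdges hP hrv hf
  obtain ⟨-, Q, hQ, hEQ⟩ := hqf _ hJsub (hEfin.insert e)
  have hQfin : Q.Finite := (aux_eplus_finite_iff hQ hrv).mp (by rw [hEQ]; exact hEfin.insert e)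
  have h1 : Q.ncard = (Eplus P).ncard + 1 := by
    rw [← aux_eplus_ncard hQ hrv, hEQ, Set.ncard_insert_of_notMem hne hEfin]
  have h2 := aux_ncard_le_of_smax hsm hfin hQ hQfin
  have h3 := aux_eplus_ncard hP hrv
  omega

private lemma aux_rich_avoid (hP : IntDisjSys D r v P) (hinf : ¬ P.Finite)
    {F : Set V} (hF : F.Finite) (hrF : r ∉ F) (hvF : v ∉ F) :
    ∃ p ∈ P, p.vertexSet ∩ F = ∅ := by
  have hsub : ∀ x ∈ F, {p ∈ P | x ∈ p.vertexSet}.Subsingleton := by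
    intro x hx p hp q hq
    by_contra hne
    have := hP.2 p hp.1 q hq.1 hne ⟨hp.2, hq.2⟩
    rcases this with h | h
    · exact hrF (h ▸ hx)
    · exact hvF ((Set.mem_singleton_iff.mp h) ▸ hx)
  have hBsub : {p ∈ P | (p.vertexSet ∩ F).Nonempty} ⊆ ⋃ x ∈ F, {p ∈ P | x ∈ p.vertexSet} := by
    rintro p ⟨hp, x, hx1, hx2⟩
    exact Set.mem_biUnion hx2 ⟨hp, hx1⟩
  have hBfin : {p ∈ P | (p.vertexSet ∩ F).Nonempty}.Finite :=
    (hF.biUnion (fun x hx => (hsub x hx).finite)).subset hBsub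
  have hinf' : Set.Infinite P := hinf
  obtain ⟨p, hp⟩ := (hinf'.diff hBfin).nonempty
  refine ⟨p, hp.1, ?_⟩
  by_contra hne
  exact hp.2 ⟨hp.1, Set.nonempty_iff_ne_empty.mpr hne⟩

end ProofAux2

section ProofAux3

variable {V : Type u} {D L : Set (V × V)} {r : V}

private lemma aux_single_path (hL : L ⊆ D) (hquasi : QuasiFlame D r) (hlarge : IsLarge D L r) :
    ∀ n : ℕ, ∀ p : DiPath V, p.verts.length ≤ n → IsPathIn D p → p.first = r →
      ∀ F : Set V, F.Finite → p.vertexSet ∩ F = ∅ →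
      ∃ q : DiPath V, IsPathIn L q ∧ q.first = r ∧ q.last = p.last ∧ q.vertexSet ∩ F = ∅ := by
  intro n
  induction n with
  | zero =>
    intro p hlen
    have := List.length_pos_iff.mpr p.ne
    omega
  | succ n ih =>
    intro p hlen hpD hpf F hF hpF
    by_cases h2 : 2 ≤ p.verts.length
    · -- nontrivial path
      have htr : p.last ≠ r := by
        intro hc
        exact (DiPath.aux_first_ne_last h2) (hpf.trans hc.symm)
      obtain ⟨Pt, hsmt, hLt⟩ := hlarge p.last htr
      have hrF : r ∉ F := by
        intro hc
        have : r ∈ p.vertexSet ∩ F := ⟨hpf ▸ p.aux_first_mem_vs, hc⟩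
        rw [hpF] at this
        exact this
      have htF : p.last ∉ F := by
        intro hc
        have : p.last ∈ p.vertexSet ∩ F := ⟨p.aux_last_mem_vs, hc⟩
        rw [hpF] at this
        exact this
      by_cases hfin : Pt.Finite
      · -- "poor" endpoint : step back along p
        obtain ⟨x, hsome, hxgl⟩ := DiPath.aux_lastEdge_spec h2
        have hxD : (x, p.last) ∈ D :=
          DiPath.aux_edges_subset hpD (DiPath.aux_lastEdge_mem_edges hsome)
        have hxin : (x, p.last) ∈ inEdges D p.last := ⟨hxD, rfl⟩
        have hxE : (x, p.last) ∈ Eplus Pt :=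
          aux_poor_full htr (hquasi p.last htr) hsmt hfin hxin
        obtain ⟨pp, hppPt, hpplast⟩ := hxE
        have hxL : (x, p.last) ∈ L :=
          DiPath.aux_edges_subset (hLt pp hppPt) (DiPath.aux_lastEdge_mem_edges hpplast)
        -- recurse on p minus its last vertex
        set p' := p.auxDropLast h2 with hp'
        have hlen' : p'.verts.length ≤ n := by
          have h3 : p'.verts.length = p.verts.length - 1 := List.length_dropLast
          omega
        have hp'D : IsPathIn D p' := DiPath.auxDropLast_isPath hpD h2
        have hp'f : p'.first = r := (DiPath.auxDropLast_first h2).trans hpf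
        have hp'F : p'.vertexSet ∩ (insert p.last F) = ∅ := by
          apply Set.eq_empty_iff_forall_notMem.mpr
          rintro y ⟨hy1, hy2⟩
          rcases Set.mem_insert_iff.mp hy2 with rfl | hy2
          · exact DiPath.aux_last_not_mem_auxDropLast h2 hy1
          · have : y ∈ p.vertexSet ∩ F := ⟨DiPath.auxDropLast_subset h2 hy1, hy2⟩
            rw [hpF] at this
            exact this
        obtain ⟨q', hq'L, hq'f, hq'l, hq'F⟩ :=
          ih p' hlen' hp'D hp'f (insert p.last F) (hF.insert _) hp'F
        have hq'x : q'.last = x := hq'l.trans (DiPath.auxDropLast_last hxgl)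
        have htq' : p.last ∉ q'.verts := by
          intro hc
          have : p.last ∈ q'.vertexSet ∩ (insert p.last F) := ⟨hc, Set.mem_insert _ _⟩
          rw [hq'F] at this
          exact this
        refine ⟨q'.auxSnoc p.last htq', ?_, ?_, ?_, ?_⟩
        · exact DiPath.auxSnoc_isPath htq' hq'L (by rw [hq'x]; exact hxL)
        · exact (DiPath.auxSnoc_first htq').trans hq'f
        · exact DiPath.auxSnoc_last htq'
        · rw [DiPath.auxSnoc_vertexSet htq']
          apply Set.eq_empty_iff_forall_notMem.mpr
          rintro y ⟨hy1, hy2⟩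
          rcases hy1 with hy1 | hy1
          · have : y ∈ q'.vertexSet ∩ (insert p.last F) := ⟨hy1, Set.mem_insert_of_mem _ hy2⟩
            rw [hq'F] at this
            exact this
          · exact htF ((Set.mem_singleton_iff.mp hy1) ▸ hy2)
      · -- "rich" endpoint : pick a fresh path of Pt
        obtain ⟨q, hqPt, hqF⟩ := aux_rich_avoid hsmt.1 hfin hF hrF htF
        obtain ⟨_, hqf, hql⟩ := hsmt.1.1 q hqPt
        exact ⟨q, hLt q hqPt, hqf, hql, hqF⟩
    · -- trivial path
      refine ⟨p, ?_, hpf, rfl, hpF⟩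
      have h0 : 0 < p.verts.length := List.length_pos_iff.mpr p.ne
      have h1 : p.verts.length = 1 := by omega
      obtain ⟨a, ha⟩ := List.length_eq_one_iff.mp h1
      show List.Chain' _ p.verts
      rw [ha]
      exact List.isChain_singleton a

end ProofAux3

section ProofAux4

variable {V : Type u} {D L : Set (V × V)} {r : V}

private lemma aux_fan (hL : L ⊆ D) (hquasi : QuasiFlame D r) (hlarge : IsLarge D L r) (v : V) :
    ∀ (J : Finset (V × V)), ∀ (ρ : V × V → DiPath V) (G : Set V), G.Finite → r ∉ G → v ∉ G →
      (∀ e ∈ J, IsPathIn D (ρ e) ∧ (ρ e).first = r ∧ (ρ e).last = e.1 ∧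
        (ρ e).vertexSet ∩ insert v G = ∅ ∧
        ∀ e' ∈ J, e ≠ e' → (ρ e).vertexSet ∩ (ρ e').vertexSet ⊆ {r}) →
      ∃ σ : V × V → DiPath V, ∀ e ∈ J, IsPathIn L (σ e) ∧ (σ e).first = r ∧ (σ e).last = e.1 ∧
        (σ e).vertexSet ∩ insert v G = ∅ ∧
        ∀ e' ∈ J, e ≠ e' → (σ e).vertexSet ∩ (σ e').vertexSet ⊆ {r} := by
  classical
  intro J
  induction J using Finset.induction_on with
  | empty =>
    intro ρ G _ _ _ _
    exact ⟨ρ, by simp⟩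
  | @insert e J' henJ ih =>
    intro ρ G hG hrG hvG H
    obtain ⟨hρD, hρf, hρl, hρdisj, hρpair⟩ := H e (Finset.mem_insert_self e J')
    have hρdisj' : ∀ y, y ∈ (ρ e).vertexSet → y ≠ v ∧ y ∉ G := by
      intro y hy
      constructor
      · rintro rfl
        have : y ∈ (ρ e).vertexSet ∩ insert y G := ⟨hy, Set.mem_insert _ _⟩
        rw [hρdisj] at this
        exact this
      · intro hc
        have : y ∈ (ρ e).vertexSet ∩ insert v G := ⟨hy, Set.mem_insert_of_mem _ hc⟩
        rw [hρdisj] at this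
        exact this
    set G' : Set V := G ∪ ((ρ e).vertexSet \ {r}) with hG'
    have hG'fin : G'.Finite := hG.union (((ρ e).verts.finite_toSet).diff)
    have hrG' : r ∉ G' := by
      rw [hG']
      rintro (h | h)
      · exact hrG h
      · exact h.2 rfl
    have hvG' : v ∉ G' := by
      rw [hG']
      rintro (h | h)
      · exact hvG h
      · exact (hρdisj' v h.1).1 rfl
    have HJ' : ∀ e' ∈ J', IsPathIn D (ρ e') ∧ (ρ e').first = r ∧ (ρ e').last = e'.1 ∧
        (ρ e').vertexSet ∩ insert v G' = ∅ ∧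
        ∀ e'' ∈ J', e' ≠ e'' → (ρ e').vertexSet ∩ (ρ e'').vertexSet ⊆ {r} := by
      intro e' he'
      obtain ⟨h1, h2, h3, h4, h5⟩ := H e' (Finset.mem_insert_of_mem he')
      refine ⟨h1, h2, h3, ?_, fun e'' he'' hne => h5 e'' (Finset.mem_insert_of_mem he'') hne⟩
      apply Set.eq_empty_iff_forall_notMem.mpr
      rintro y ⟨hy1, hy2⟩
      rcases Set.mem_insert_iff.mp hy2 with rfl | hy2
      · have : y ∈ (ρ e').vertexSet ∩ insert y G := ⟨hy1, Set.mem_insert _ _⟩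
        rw [h4] at this
        exact this
      · rw [hG'] at hy2
        rcases hy2 with hy2 | hy2
        · have : y ∈ (ρ e').vertexSet ∩ insert v G := ⟨hy1, Set.mem_insert_of_mem _ hy2⟩
          rw [h4] at this
          exact this
        · have hne : e' ≠ e := by
            rintro rfl
            exact henJ he'
          have := h5 e (Finset.mem_insert_self e J') hne ⟨hy1, hy2.1⟩
          exact hy2.2 (Set.mem_singleton_iff.mp this)
    obtain ⟨σ', hσ'⟩ := ih ρ G' hG'fin hrG' hvG' HJ'
    set F : Set V := insert v G ∪ ⋃ e' ∈ (J' : Set (V × V)), ((σ' e').vertexSet \ {r})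
      with hF
    have hFfin : F.Finite :=
      (hG.insert v).union (J'.finite_toSet.biUnion
        (fun e' _ => ((σ' e').verts.finite_toSet).diff))
    have hρF : (ρ e).vertexSet ∩ F = ∅ := by
      apply Set.eq_empty_iff_forall_notMem.mpr
      rintro y ⟨hy1, hy2⟩
      rw [hF] at hy2
      rcases hy2 with hy2 | hy2
      · have : y ∈ (ρ e).vertexSet ∩ insert v G := ⟨hy1, hy2⟩
        rw [hρdisj] at this
        exact this
      · simp only [Set.mem_iUnion, Finset.mem_coe, exists_prop] at hy2
        obtain ⟨e', he', hy3⟩ := hy2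
        have hyG' : y ∈ insert v G' := by
          rw [hG']
          exact Set.mem_insert_of_mem _ (Set.mem_union_right _ ⟨hy1, hy3.2⟩)
        have : y ∈ (σ' e').vertexSet ∩ insert v G' := ⟨hy3.1, hyG'⟩
        rw [(hσ' e' he').2.2.2.1] at this
        exact this
    obtain ⟨τ, hτL, hτf, hτl, hτF⟩ :=
      aux_single_path hL hquasi hlarge ((ρ e).verts.length) (ρ e) le_rfl hρD hρf F hFfin hρF
    have hτnotσ' : ∀ e' ∈ J', (τ.vertexSet ∩ (σ' e').vertexSet) ⊆ {r} := by
      intro e' he' y hy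
      by_contra hyr
      have hyF : y ∈ F := by
        rw [hF]
        apply Set.mem_union_right
        simp only [Set.mem_iUnion, Finset.mem_coe, exists_prop]
        exact ⟨e', he', hy.2, fun hc => hyr (hc ▸ rfl)⟩
      have : y ∈ τ.vertexSet ∩ F := ⟨hy.1, hyF⟩
      rw [hτF] at this
      exact this
    refine ⟨fun x => if x = e then τ else σ' x, ?_⟩
    intro e₁ he₁
    simp only []
    rcases Finset.mem_insert.mp he₁ with rfl | he₁'
    · rw [if_pos rfl]
      refine ⟨hτL, hτf, hτl.trans hρl, ?_, ?_⟩
      · apply Set.eq_empty_iff_forall_notMem.mpr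
        rintro y ⟨hy1, hy2⟩
        have hyF : y ∈ F := by rw [hF]; exact Set.mem_union_left _ hy2
        have : y ∈ τ.vertexSet ∩ F := ⟨hy1, hyF⟩
        rw [hτF] at this
        exact this
      · intro e₂ he₂ hne
        rcases Finset.mem_insert.mp he₂ with rfl | he₂'
        · exact absurd rfl hne
        · rw [if_neg (by rintro rfl; exact henJ he₂')]
          exact hτnotσ' e₂ he₂'
    · rw [if_neg (by rintro rfl; exact henJ he₁')]
      obtain ⟨h1, h2, h3, h4, h5⟩ := hσ' e₁ he₁'
      refine ⟨h1, h2, h3, ?_, ?_⟩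
      · apply Set.eq_empty_iff_forall_notMem.mpr
        rintro y ⟨hy1, hy2⟩
        have : y ∈ (σ' e₁).vertexSet ∩ insert v G' := by
          refine ⟨hy1, ?_⟩
          rcases Set.mem_insert_iff.mp hy2 with rfl | hy2
          · exact Set.mem_insert _ _
          · exact Set.mem_insert_of_mem _ (by rw [hG']; exact Set.mem_union_left _ hy2)
        rw [h4] at this
        exact this
      · intro e₂ he₂ hne
        rcases Finset.mem_insert.mp he₂ with rfl | he₂'
        · rw [if_pos rfl]
          intro y hy
          exact hτnotσ' e₁ he₁' ⟨hy.2, hy.1⟩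
        · rw [if_neg (by rintro rfl; exact henJ he₂')]
          exact h5 e₂ he₂' hne

end ProofAux4

/-- If `D` is a quasi-vertex-flame and `L` is a large spanning subdigraph of `D`, then
`L` is also a quasi-vertex-flame. -/
theorem large_of_quasi_flame_is_quasi_flame (D L : Set (V × V)) (r : V)
    (hsimple : NoLoops D) (hroot : IsRoot D r)
    (hL : L ⊆ D) (hquasi : QuasiFlame D r) (hlarge : IsLarge D L r) :
    QuasiFlame L r := by
  classical
  intro v hv I hIL hIfin
  have hID : I ⊆ inEdges D v := fun e he => ⟨hL (hIL he).1, (hIL he).2⟩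
  obtain ⟨-, P₀, hP₀, hEP₀⟩ := hquasi v hv I hID hIfin
  -- choose for each edge of I a path of P₀ ending with it
  have hch : ∀ e : V × V, ∃ p : DiPath V, e ∈ I → p ∈ P₀ ∧ p.lastEdge = some e := by
    intro e
    by_cases he : e ∈ I
    · have he' : e ∈ Eplus P₀ := by rw [hEP₀]; exact he
      obtain ⟨p, hp, hpe⟩ := he'
      exact ⟨p, fun _ => ⟨hp, hpe⟩⟩
    · exact ⟨⟨[r], by simp, by simp⟩, fun h => absurd h he⟩
  choose pf hpf using hch
  have h2I : ∀ e ∈ I, 2 ≤ (pf e).verts.length :=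
    fun e he => DiPath.aux_lastEdge_two_le (hpf e he).2
  set ρ : V × V → DiPath V :=
    fun e => if h : 2 ≤ (pf e).verts.length then (pf e).auxDropLast h else pf e with hρ
  -- basic properties of the truncated paths
  have hρprops : ∀ e ∈ I, IsPathIn D (ρ e) ∧ (ρ e).first = r ∧ (ρ e).last = e.1 ∧
      (ρ e).vertexSet ⊆ (pf e).vertexSet ∧ v ∉ (ρ e).vertexSet := by
    intro e he
    obtain ⟨hpfP, hpfe⟩ := hpf e he
    obtain ⟨hpfD, hpff, hpfl⟩ := hP₀.1 (pf e) hpfP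
    have h2 := h2I e he
    have hre : ρ e = (pf e).auxDropLast h2 := by
      rw [hρ]
      simp only [dif_pos h2]
    rw [hre]
    refine ⟨DiPath.auxDropLast_isPath hpfD h2, (DiPath.auxDropLast_first h2).trans hpff,
      DiPath.auxDropLast_last (DiPath.aux_lastEdge_parts hpfe).2,
      DiPath.auxDropLast_subset h2, ?_⟩
    rw [← hpfl]
    exact DiPath.aux_last_not_mem_auxDropLast h2
  -- the D-fan hypothesis
  have Hfan : ∀ e ∈ hIfin.toFinset, IsPathIn D (ρ e) ∧ (ρ e).first = r ∧ (ρ e).last = e.1 ∧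
      (ρ e).vertexSet ∩ insert v (∅ : Set V) = ∅ ∧
      ∀ e' ∈ hIfin.toFinset, e ≠ e' → (ρ e).vertexSet ∩ (ρ e').vertexSet ⊆ {r} := by
    intro e he
    rw [Set.Finite.mem_toFinset] at he
    obtain ⟨h1, h2, h3, h4, h5⟩ := hρprops e he
    refine ⟨h1, h2, h3, ?_, ?_⟩
    · apply Set.eq_empty_iff_forall_notMem.mpr
      rintro y ⟨hy1, hy2⟩
      rcases Set.mem_insert_iff.mp hy2 with rfl | hy2
      · exact h5 hy1
      · exact hy2
    · intro e' he' hne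
      rw [Set.Finite.mem_toFinset] at he'
      obtain ⟨h1', h2', h3', h4', h5'⟩ := hρprops e' he'
      have hpfne : pf e ≠ pf e' := by
        intro hc
        have := (hpf e he).2
        rw [hc, (hpf e' he').2] at this
        exact hne (Option.some.inj this).symm
      intro y hy
      have hyv : y ∈ (pf e).vertexSet ∩ (pf e').vertexSet := ⟨h4 hy.1, h4' hy.2⟩
      have := hP₀.2 (pf e) (hpf e he).1 (pf e') (hpf e' he').1 hpfne hyv
      rcases Set.mem_insert_iff.mp this with rfl | hmem
      · rfl
      · exact absurd ((Set.mem_singleton_iff.mp hmem) ▸ hy.1) h5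
  obtain ⟨σ, hσ⟩ := aux_fan hL hquasi hlarge v hIfin.toFinset ρ ∅ Set.finite_empty
    (Set.notMem_empty r) (Set.notMem_empty v) Hfan
  -- properties of σ for edges of I
  have hσI : ∀ e ∈ I, IsPathIn L (σ e) ∧ (σ e).first = r ∧ (σ e).last = e.1 ∧
      v ∉ (σ e).verts ∧
      ∀ e' ∈ I, e ≠ e' → (σ e).vertexSet ∩ (σ e').vertexSet ⊆ {r} := by
    intro e he
    obtain ⟨h1, h2, h3, h4, h5⟩ := hσ e (hIfin.mem_toFinset.mpr he)
    refine ⟨h1, h2, h3, ?_, fun e' he' => h5 e' (hIfin.mem_toFinset.mpr he')⟩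
    intro hc
    have : v ∈ (σ e).vertexSet ∩ insert v (∅ : Set V) := ⟨hc, Set.mem_insert _ _⟩
    rw [h4] at this
    exact this
  -- extend each σ-path by the final edge into v
  set τ : V × V → DiPath V :=
    fun e => if h : v ∉ (σ e).verts then (σ e).auxSnoc v h else σ e with hτ
  have hτI : ∀ e ∈ I, IsPathIn L (τ e) ∧ (τ e).first = r ∧ (τ e).last = v ∧
      (τ e).lastEdge = some e ∧ (τ e).vertexSet = (σ e).vertexSet ∪ {v} := by
    intro e he
    obtain ⟨h1, h2, h3, h4, h5⟩ := hσI e he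
    have hre : τ e = (σ e).auxSnoc v h4 := by
      rw [hτ]
      simp only [dif_pos h4]
    have heq : (e.1, v) = e := by
      rw [← (hIL he).2]
    rw [hre]
    refine ⟨DiPath.auxSnoc_isPath h4 h1 (by rw [h3, heq]; exact (hIL he).1),
      (DiPath.auxSnoc_first h4).trans h2, DiPath.auxSnoc_last h4, ?_,
      DiPath.auxSnoc_vertexSet h4⟩
    rw [DiPath.auxSnoc_lastEdge h4, h3, heq]
  -- the final path system
  refine ⟨hIL, {p | ∃ e ∈ I, p = τ e}, ⟨?_, ?_⟩, ?_⟩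
  · rintro p ⟨e, he, rfl⟩
    obtain ⟨h1, h2, h3, _, _⟩ := hτI e he
    exact ⟨h1, h2, h3⟩
  · rintro p ⟨e, he, rfl⟩ q ⟨e', he', rfl⟩ hne
    have hee' : e ≠ e' := by
      rintro rfl
      exact hne rfl
    rintro y ⟨hy1, hy2⟩
    rw [(hτI e he).2.2.2.2] at hy1
    rw [(hτI e' he').2.2.2.2] at hy2
    rcases hy1 with hy1 | hy1
    · rcases hy2 with hy2 | hy2
      · have h9 := (hσI e he).2.2.2.2 e' he' hee' ⟨hy1, hy2⟩
        rw [Set.mem_singleton_iff.mp h9]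
        exact Set.mem_insert _ _
      · exact Set.mem_insert_of_mem _ hy2
    · exact Set.mem_insert_of_mem _ hy1
  · ext e''
    constructor
    · rintro ⟨p, ⟨e, he, rfl⟩, hpe⟩
      rw [(hτI e he).2.2.2.1] at hpe
      rw [← Option.some.inj hpe]
      exact he
    · intro he''
      exact ⟨τ e'', ⟨e'', he'', rfl⟩, (hτI e'' he'').2.2.2.1⟩
end

section
/- Pym's linkage theorem: Let D be a digraph, X,Y ⊆ V(D), and let 𝒫 and 𝒬 be systems of pairwise vertex-disjoint X→Y paths. Then there is a system ℛ of pairwise vertex-disjoint X→Y paths such that V⁻(ℛ) ⊇ V⁻(𝒫) and V⁺(ℛ) ⊇ V⁺(𝒬), and moreover each R ∈ ℛ is either in 𝒫 ∪ 𝒬 or there are P ∈ 𝒫, Q ∈ 𝒬 and a vertex v_R ∈ V(P) ∩ V(Q) such that R = P v_R Q. -/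
/-!
Common framework: a digraph on a vertex type `V` is given by its edge set
`D : Set (V × V)` (this automatically makes it simple in the sense of having
no parallel edges; absence of loops is the predicate `NoLoops`).
Paths are nonempty duplicate-free lists of vertices.
-/

universe u

variable {V : Type u}

namespace PymAux
variable [DecidableEq V]

/-- the part of `l` strictly before (the first occurrence of) `v`. -/
def sb (l : List V) (v : V) : List V := l.takeWhile (fun x => decide (x ≠ v))
/-- the part of `l` from (the first occurrence of) `v` on. -/
def dw (l : List V) (v : V) : List V := l.dropWhile (fun x => decide (x ≠ v))

lemma sb_cons (a : V) (t : List V) (v : V) :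
    sb (a::t) v = if a = v then [] else a :: sb t v := by
  simp only [sb, List.takeWhile_cons]
  by_cases h : a = v <;> simp [h]

lemma dw_cons (a : V) (t : List V) (v : V) :
    dw (a::t) v = if a = v then a::t else dw t v := by
  simp only [dw, List.dropWhile_cons]
  by_cases h : a = v <;> simp [h]

lemma sb_append_dw (l : List V) (v : V) : sb l v ++ dw l v = l :=
  List.takeWhile_append_dropWhile

lemma sb_prefix (l : List V) (v : V) : sb l v <+: l := List.takeWhile_prefix _
lemma dw_suffix (l : List V) (v : V) : dw l v <:+ l := List.dropWhile_suffix _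

lemma sb_subset {l : List V} {v x : V} (h : x ∈ sb l v) : x ∈ l :=
  (sb_prefix l v).subset h
lemma dw_subset {l : List V} {v x : V} (h : x ∈ dw l v) : x ∈ l :=
  (dw_suffix l v).subset h

lemma mem_sb_ne {l : List V} {v x : V} (h : x ∈ sb l v) : x ≠ v := by
  have := List.mem_takeWhile_imp h
  simpa using this

lemma mem_sb_or_dw {l : List V} {v x : V} (h : x ∈ l) : x ∈ sb l v ∨ x ∈ dw l v := by
  rw [← sb_append_dw l v] at h
  simpa using h

lemma dw_ne_nil {l : List V} {v : V} (h : v ∈ l) : dw l v ≠ [] := by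
  intro he
  have := List.dropWhile_eq_nil_iff.mp he v h
  simp at this

lemma head?_dw {l : List V} {v : V} (h : v ∈ l) : (dw l v).head? = some v := by
  induction l with
  | nil => simp at h
  | cons a t ih =>
    rw [dw_cons]
    by_cases hav : a = v
    · simp [hav]
    · simp only [hav, if_false]
      apply ih
      rcases List.mem_cons.mp h with h|h
      · exact absurd h.symm hav
      · exact h

lemma mem_dw_self {l : List V} {v : V} (h : v ∈ l) : v ∈ dw l v := by
  have h2 := head?_dw h
  exact List.mem_of_mem_head? (by rw [h2]; rfl)

lemma sb_dw_disj {l : List V} (hnd : l.Nodup) {v x : V} (h1 : x ∈ sb l v) (h2 : x ∈ dw l v) :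
    False := by
  have := hnd
  rw [← sb_append_dw l v, List.nodup_append] at this
  exact this.2.2 x h1 x h2 rfl

lemma sb_total {l : List V} {x y : V} (hx : x ∈ l) (hy : y ∈ l) (hne : x ≠ y) :
    x ∈ sb l y ∨ y ∈ sb l x := by
  induction l with
  | nil => simp at hx
  | cons a t ih =>
    rcases eq_or_ne a y with rfl|hay
    · right
      rw [sb_cons, if_neg (fun h : a = x => hne h.symm)]
      exact List.mem_cons_self
    · rcases eq_or_ne a x with rfl|hax
      · left
        rw [sb_cons, if_neg hay]
        exact List.mem_cons_self
      · rw [sb_cons, sb_cons]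
        have hx' : x ∈ t := by
          rcases List.mem_cons.mp hx with h|h
          · exact absurd h.symm hax
          · exact h
        have hy' : y ∈ t := by
          rcases List.mem_cons.mp hy with h|h
          · exact absurd h.symm hay
          · exact h
        rcases ih hx' hy' with h|h
        · left; rw [if_neg hay]; exact List.mem_cons_of_mem _ h
        · right; rw [if_neg hax]; exact List.mem_cons_of_mem _ h

lemma sb_sb {l : List V} {v x : V} (h : x ∈ sb l v) : sb l x ⊆ sb l v := by
  induction l with
  | nil => simp [sb] at h
  | cons a t ih =>
    rw [sb_cons] at h ⊢
    rw [sb_cons]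
    by_cases hav : a = v
    · simp [hav] at h
    · rw [if_neg hav] at h ⊢
      by_cases hax : a = x
      · intro y hy; rw [if_pos hax] at hy; simp at hy
      · rw [if_neg hax]
        rcases List.mem_cons.mp h with h|h
        · exact absurd h.symm hax
        · intro y hy
          rcases List.mem_cons.mp hy with hy|hy
          · exact hy ▸ List.mem_cons_self
          · exact List.mem_cons_of_mem _ (ih h hy)

lemma dw_sb_trans {l : List V} (hnd : l.Nodup) {v x y : V} (h1 : y ∈ dw l v)
    (h2 : y ∈ sb l x) : v ∈ sb l x ∨ v = x := by
  induction l with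
  | nil => simp [dw] at h1
  | cons a t ih =>
    rw [dw_cons] at h1
    rw [sb_cons] at h2 ⊢
    by_cases hax : a = x
    · simp [hax] at h2
    · rw [if_neg hax] at h2 ⊢
      by_cases hav : a = v
      · left; exact hav ▸ List.mem_cons_self
      · rw [if_neg hav] at h1
        have hyt : y ∈ t := dw_subset h1
        rcases List.mem_cons.mp h2 with h|h
        · exact absurd (h ▸ hyt) (List.nodup_cons.mp hnd).1
        · rcases ih (List.nodup_cons.mp hnd).2 h1 h with h'|h'
          · left; exact List.mem_cons_of_mem _ h'
          · right; exact h'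

lemma head_eq_of_mem_dw {l : List V} (hnd : l.Nodup) (hne : l ≠ []) {v : V} (hv : v ∈ l)
    (h : l.head hne ∈ dw l v) : v = l.head hne := by
  induction l with
  | nil => simp at hv
  | cons a t ih =>
    simp only [List.head_cons] at h ⊢
    rw [dw_cons] at h
    by_cases hav : a = v
    · exact hav.symm
    · rw [if_neg hav] at h
      exact absurd (dw_subset h) (List.nodup_cons.mp hnd).1

lemma exists_min {l : List V} {S : Set V} (h : ∃ x ∈ l, x ∈ S) :
    ∃ f ∈ l, f ∈ S ∧ ∀ y ∈ sb l f, y ∉ S := by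
  induction l with
  | nil => simp at h
  | cons a t ih =>
    by_cases ha : a ∈ S
    · exact ⟨a, List.mem_cons_self, ha, by rw [sb_cons]; simp⟩
    · obtain ⟨x, hx, hxS⟩ := h
      have hxt : x ∈ t := by
        rcases List.mem_cons.mp hx with h|h
        · exact absurd (h ▸ hxS) ha
        · exact h
      obtain ⟨f, hf, hfS, hmin⟩ := ih ⟨x, hxt, hxS⟩
      refine ⟨f, List.mem_cons_of_mem _ hf, hfS, ?_⟩
      intro y hy
      rw [sb_cons, if_neg (fun haf : a = f => ha (haf ▸ hfS))] at hy
      rcases List.mem_cons.mp hy with h|h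
      · exact h ▸ ha
      · exact hmin y h

lemma exists_max {l : List V} (hnd : l.Nodup) {S : Set V} (h : ∃ x ∈ l, x ∈ S) :
    ∃ g ∈ l, g ∈ S ∧ ∀ x ∈ l, x ∈ S → g ∉ sb l x := by
  induction l with
  | nil => simp at h
  | cons a t ih =>
    by_cases ht : ∃ x ∈ t, x ∈ S
    · obtain ⟨g, hg, hgS, hmax⟩ := ih (List.nodup_cons.mp hnd).2 ht
      refine ⟨g, List.mem_cons_of_mem _ hg, hgS, ?_⟩
      intro x hx hxS hmem
      rw [sb_cons] at hmem
      by_cases hax : a = x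
      · simp [hax] at hmem
      · rw [if_neg hax] at hmem
        rcases List.mem_cons.mp hmem with h'|h'
        · exact (List.nodup_cons.mp hnd).1 (h' ▸ hg)
        · have hxt : x ∈ t := by
            rcases List.mem_cons.mp hx with h''|h''
            · exact absurd h''.symm hax
            · exact h''
          exact hmax x hxt hxS h'
    · obtain ⟨x, hx, hxS⟩ := h
      have hxa : x = a := by
        rcases List.mem_cons.mp hx with h'|h'
        · exact h'
        · exact absurd ⟨x, h', hxS⟩ ht
      refine ⟨a, List.mem_cons_self, hxa ▸ hxS, ?_⟩
      intro z hz hzS hmem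
      rcases List.mem_cons.mp hz with h''|h''
      · subst h''
        rw [sb_cons, if_pos rfl] at hmem
        simp at hmem
      · exact ht ⟨z, h'', hzS⟩

lemma getLast_dw {l : List V} (hne : l ≠ []) {v : V} (hv : v ∈ l) :
    (dw l v).getLast (dw_ne_nil hv) = l.getLast hne := by
  obtain ⟨t, ht⟩ := dw_suffix l v
  have h2 : l.getLast? = (dw l v).getLast? := by
    conv_lhs => rw [← ht]
    rw [List.getLast?_append, List.getLast?_eq_getLast (dw_ne_nil hv)]
    rfl
  rw [List.getLast?_eq_getLast hne, List.getLast?_eq_getLast (dw_ne_nil hv)] at h2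
  exact (Option.some_injective _ h2).symm


lemma head?_splice {l l' : List V} {v : V} (hv : v ∈ l) (hv' : v ∈ l') :
    (sb l v ++ dw l' v).head? = l.head? := by
  rw [List.head?_append, head?_dw hv']
  conv_rhs => rw [← sb_append_dw l v]
  rw [List.head?_append, head?_dw hv]

lemma getLast?_splice {l l' : List V} {v : V} (hv' : v ∈ l') :
    (sb l v ++ dw l' v).getLast? = l'.getLast? := by
  rw [List.getLast?_append, List.getLast?_eq_getLast (dw_ne_nil hv')]
  have h2 : l'.getLast? = (dw l' v).getLast? := by
    obtain ⟨t, ht⟩ := dw_suffix l' v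
    conv_lhs => rw [← ht]
    rw [List.getLast?_append, List.getLast?_eq_getLast (dw_ne_nil hv')]
    rfl
  rw [h2, List.getLast?_eq_getLast (dw_ne_nil hv')]
  rfl

lemma chain'_splice {R : V → V → Prop} {l l' : List V} {v : V} (hv : v ∈ l) (hv' : v ∈ l')
    (hl : List.Chain' R l) (hl' : List.Chain' R l') :
    List.Chain' R (sb l v ++ dw l' v) := by
  change List.IsChain R l at hl
  change List.IsChain R l' at hl'
  change List.IsChain R _
  rw [List.isChain_append]
  refine ⟨hl.prefix (sb_prefix l v), hl'.suffix (dw_suffix l' v), ?_⟩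
  intro x hx y hy
  rw [head?_dw hv'] at hy
  have hy' : v = y := by simpa using hy
  subst hy'
  have := hl
  conv at this => rw [← sb_append_dw l v]
  rw [List.isChain_append] at this
  exact this.2.2 x hx v (by rw [head?_dw hv]; rfl)

end PymAux

namespace PymMain
open PymAux
variable [DecidableEq V]

omit [DecidableEq V] in
lemma dipath_ext {p q : DiPath V} (h : p.verts = q.verts) : p = q := by
  cases p; cases q; simp_all

/-- the closed prefix of `p` w.r.t. `B`: vertices with no `B`-vertex strictly before them. -/
def cpS (B : Set V) (p : DiPath V) : Set V :=
  {x | x ∈ p.verts ∧ ∀ y ∈ sb p.verts x, y ∉ B}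

/-- the closed tail of `q` w.r.t. `A`: vertices with no `A`-vertex of `q` strictly after them. -/
def tlS (A : Set V) (q : DiPath V) : Set V :=
  {y | y ∈ q.verts ∧ ∀ x ∈ A, x ∈ q.verts → y ∉ sb q.verts x}

def aOp (P : Set (DiPath V)) (B : Set V) : Set V := ⋃ p ∈ P, cpS B p
def bOp (Q : Set (DiPath V)) (A : Set V) : Set V := ⋃ q ∈ Q, tlS A q

lemma aOp_anti (P : Set (DiPath V)) {B B' : Set V} (h : B ⊆ B') : aOp P B' ⊆ aOp P B := by
  intro x hx
  simp only [aOp, Set.mem_iUnion] at hx ⊢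
  obtain ⟨p, hp, hxp, hcp⟩ := hx
  exact ⟨p, hp, hxp, fun y hy hyB => hcp y hy (h hyB)⟩

lemma bOp_anti (Q : Set (DiPath V)) {A A' : Set V} (h : A ⊆ A') : bOp Q A' ⊆ bOp Q A := by
  intro x hx
  simp only [bOp, Set.mem_iUnion] at hx ⊢
  obtain ⟨q, hq, hxq, htl⟩ := hx
  exact ⟨q, hq, hxq, fun y hy => htl y (h hy)⟩

def Afix (P Q : Set (DiPath V)) : Set V := sInf {A | aOp P (bOp Q A) ⊆ A}

lemma Afix_fixed (P Q : Set (DiPath V)) : aOp P (bOp Q (Afix P Q)) = Afix P Q := by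
  set F : Set V → Set V := fun A => aOp P (bOp Q A) with hF
  have hmono : ∀ {A A' : Set V}, A ⊆ A' → F A ⊆ F A' :=
    fun h => aOp_anti P (bOp_anti Q h)
  have h1 : F (Afix P Q) ⊆ Afix P Q :=
    le_sInf fun A hA => le_trans (hmono (sInf_le hA)) hA
  have h2 : Afix P Q ⊆ F (Afix P Q) := sInf_le (hmono h1)
  exact Set.Subset.antisymm h1 h2

lemma spliceVerts_eq (p q : DiPath V) (v : V) :
    spliceVerts p q v = sb p.verts v ++ dw q.verts v := rfl

lemma splice_ne {p q : DiPath V} {v : V} (hvq : v ∈ q.verts) : spliceVerts p q v ≠ [] := by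
  rw [spliceVerts_eq]
  intro h
  exact dw_ne_nil hvq (List.append_eq_nil_iff.mp h).2

lemma splice_nodup {p q : DiPath V} {v : V}
    (hdisj : ∀ x ∈ sb p.verts v, x ∉ dw q.verts v) : (spliceVerts p q v).Nodup := by
  rw [spliceVerts_eq, List.nodup_append]
  exact ⟨p.nodup.sublist (sb_prefix _ _).sublist, q.nodup.sublist (dw_suffix _ _).sublist, fun a ha b hb hab => hdisj a ha (hab ▸ hb)⟩

lemma splice_path {D : Set (V × V)} {X Y : Set V} {p q r : DiPath V} {v : V}
    (hp : IsPathIn D p) (hxp : XYPath X Y p) (hq : IsPathIn D q) (hxq : XYPath X Y q)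
    (hvp : v ∈ p.verts) (hvq : v ∈ q.verts)
    (hr : r.verts = spliceVerts p q v) :
    IsPathIn D r ∧ XYPath X Y r ∧ r.first = p.first ∧ r.last = q.last := by
  have hrv : r.verts = sb p.verts v ++ dw q.verts v := hr
  have hfirst : r.first = p.first := by
    have h1 : r.verts.head? = some r.first := List.head?_eq_head r.ne
    rw [hrv, head?_splice hvp hvq, List.head?_eq_head p.ne] at h1
    exact (Option.some_injective _ h1).symm
  have hlast : r.last = q.last := by
    have h1 : r.verts.getLast? = some r.last := List.getLast?_eq_getLast r.ne
    rw [hrv, getLast?_splice hvq, List.getLast?_eq_getLast q.ne] at h1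
    exact (Option.some_injective _ h1).symm
  have hsplit : ∀ x, x ∈ r.verts → x ∈ sb p.verts v ∨ x ∈ dw q.verts v := by
    intro x hx
    rw [hrv] at hx
    exact List.mem_append.mp hx
  have hXp1 : p.first ∈ X := by
    have h0 : p.first ∈ p.vertexSet ∩ X := by
      rw [hxp.1]; rfl
    exact h0.2
  have hXp2 : ∀ x, x ∈ p.verts → x ∈ X → x = p.first := by
    intro x h1 h2
    have : x ∈ p.vertexSet ∩ X := ⟨h1, h2⟩
    rw [hxp.1] at this
    exact this
  have hXq2 : ∀ x, x ∈ q.verts → x ∈ X → x = q.first := by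
    intro x h1 h2
    have : x ∈ q.vertexSet ∩ X := ⟨h1, h2⟩
    rw [hxq.1] at this
    exact this
  have hYq1 : q.last ∈ Y := by
    have h0 : q.last ∈ q.vertexSet ∩ Y := by
      rw [hxq.2]; rfl
    exact h0.2
  have hYq2 : ∀ x, x ∈ q.verts → x ∈ Y → x = q.last := by
    intro x h1 h2
    have : x ∈ q.vertexSet ∩ Y := ⟨h1, h2⟩
    rw [hxq.2] at this
    exact this
  have hYp2 : ∀ x, x ∈ p.verts → x ∈ Y → x = p.last := by
    intro x h1 h2
    have : x ∈ p.vertexSet ∩ Y := ⟨h1, h2⟩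
    rw [hxp.2] at this
    exact this
  refine ⟨?_, ⟨?_, ?_⟩, hfirst, hlast⟩
  · show List.Chain' _ r.verts
    rw [hrv]
    exact chain'_splice hvp hvq hp hq
  · ext x
    simp only [Set.mem_inter_iff, Set.mem_singleton_iff]
    constructor
    · rintro ⟨hxv, hxX⟩
      have hxv' : x ∈ r.verts := hxv
      rcases hsplit x hxv' with h|h
      · rw [hfirst]
        exact hXp2 x (sb_subset h) hxX
      · have hxq' : x = q.first := hXq2 x (dw_subset h) hxX
        have h4 : q.first ∈ dw q.verts v := hxq' ▸ h
        have hvq' : v = q.first := head_eq_of_mem_dw q.nodup q.ne hvq h4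
        rw [hfirst]
        exact hXp2 x (by rw [hxq', ← hvq']; exact hvp) hxX
    · rintro rfl
      refine ⟨?_, hfirst ▸ hXp1⟩
      show r.first ∈ r.verts
      exact List.head_mem r.ne
  · ext y
    simp only [Set.mem_inter_iff, Set.mem_singleton_iff]
    constructor
    · rintro ⟨hyv, hyY⟩
      have hyv' : y ∈ r.verts := hyv
      rcases hsplit y hyv' with h|h
      · exfalso
        have hyp : y = p.last := hYp2 y (sb_subset h) hyY
        have hlp : p.last ∈ dw p.verts v := by
          have h2 := List.getLast_mem (dw_ne_nil (l := p.verts) hvp)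
          rwa [getLast_dw p.ne hvp] at h2
        exact sb_dw_disj p.nodup (hyp ▸ h) hlp
      · rw [hlast]
        exact hYq2 y (dw_subset h) hyY
    · rintro rfl
      refine ⟨?_, hlast ▸ hYq1⟩
      show r.last ∈ r.verts
      exact List.getLast_mem r.ne

end PymMain

/-- **Pym's linkage theorem.** For disjoint systems `P`, `Q` of `X → Y` paths in `D`
there is a disjoint system `R` of `X → Y` paths with `V⁻(R) ⊇ V⁻(P)` and
`V⁺(R) ⊇ V⁺(Q)` such that each `R₀ ∈ R` is either in `P ∪ Q` or is of the form
`P₀ v Q₀` for some `P₀ ∈ P`, `Q₀ ∈ Q` and `v ∈ V(P₀) ∩ V(Q₀)`. -/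
theorem pym_linkage [DecidableEq V] (D : Set (V × V)) (hsimple : NoLoops D)
    (X Y : Set V) (P Q : Set (DiPath V))
    (hP : DisjSys D X Y P) (hQ : DisjSys D X Y Q) :
    ∃ R, DisjSys D X Y R ∧ Vminus P ⊆ Vminus R ∧ Vplus Q ⊆ Vplus R ∧
      ∀ p ∈ R, p ∈ P ∪ Q ∨
        ∃ p' ∈ P, ∃ q' ∈ Q, ∃ v ∈ p'.vertexSet ∩ q'.vertexSet,
          p.verts = spliceVerts p' q' v := by
  classical
  obtain ⟨hP1, hP2⟩ := hP
  obtain ⟨hQ1, hQ2⟩ := hQ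
  open PymAux PymMain in
  set A : Set V := PymMain.Afix P Q with hAdef
  set B : Set V := PymMain.bOp Q A with hBdef
  have hfix : PymMain.aOp P B = A := PymMain.Afix_fixed P Q
  have hAdec : ∀ x ∈ A, ∃ p ∈ P, x ∈ PymMain.cpS B p := by
    intro x hx
    rw [← hfix] at hx
    simpa [PymMain.aOp] using hx
  have hAint : ∀ p ∈ P, ∀ x, x ∈ PymMain.cpS B p → x ∈ A := by
    intro p hp x hx
    rw [← hfix]
    exact Set.mem_biUnion hp hx
  have hBdec : ∀ y ∈ B, ∃ q ∈ Q, y ∈ PymMain.tlS A q := by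
    intro y hy
    rw [hBdef] at hy
    simpa [PymMain.bOp] using hy
  have hBint : ∀ q ∈ Q, ∀ y, y ∈ PymMain.tlS A q → y ∈ B := by
    intro q hq y hy
    rw [hBdef]
    exact Set.mem_biUnion hq hy
  -- basic facts
  have hS1 : ∀ (p : DiPath V) v, v ∈ PymMain.cpS B p →
      ∀ x ∈ PymAux.sb p.verts v, x ∈ PymMain.cpS B p := by
    intro p v hv x hx
    exact ⟨PymAux.sb_subset hx, fun y hy => hv.2 y (PymAux.sb_sb hx hy)⟩
  have hT1 : ∀ (q : DiPath V) v, v ∈ PymMain.tlS A q →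
      ∀ y ∈ PymAux.dw q.verts v, y ∈ PymMain.tlS A q := by
    intro q v hv y hy
    refine ⟨PymAux.dw_subset hy, ?_⟩
    intro x hxA hxq hmem
    rcases PymAux.dw_sb_trans q.nodup hy hmem with h|h
    · exact hv.2 x hxA hxq h
    · rw [← h] at hmem
      exact PymAux.sb_dw_disj q.nodup hmem hy
  have hU1 : ∀ (p : DiPath V) v₁ v₂, v₁ ∈ PymMain.cpS B p → v₂ ∈ PymMain.cpS B p →
      v₁ ∈ B → v₂ ∈ B → v₁ = v₂ := by
    intro p v₁ v₂ h1 h2 hb1 hb2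
    by_contra hne
    rcases PymAux.sb_total h1.1 h2.1 hne with h|h
    · exact h2.2 v₁ h hb1
    · exact h1.2 v₂ h hb2
  have hU2 : ∀ (q : DiPath V) v₁ v₂, v₁ ∈ PymMain.tlS A q → v₂ ∈ PymMain.tlS A q →
      v₁ ∈ A → v₂ ∈ A → v₁ = v₂ := by
    intro q v₁ v₂ h1 h2 ha1 ha2
    by_contra hne
    rcases PymAux.sb_total h1.1 h2.1 hne with h|h
    · exact h1.2 v₂ ha2 h2.1 h
    · exact h2.2 v₁ ha1 h1.1 h
  have hdisjPQ : ∀ (p : DiPath V), ∀ q ∈ Q, ∀ v, v ∈ PymMain.cpS B p → v ∈ PymMain.tlS A q →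
      ∀ x ∈ PymAux.sb p.verts v, x ∉ PymAux.dw q.verts v := by
    intro p q hq v hvp hvq x hx hx'
    exact hvp.2 x hx (hBint q hq x (hT1 q v hvq x hx'))
  have hPA : ∀ p ∈ P, (∀ x ∈ p.verts, x ∉ B) → ∀ x ∈ p.verts, x ∈ A := by
    intro p hp h x hx
    exact hAint p hp x ⟨hx, fun y hy => h y (PymAux.sb_subset hy)⟩
  -- the linkage
  refine ⟨{r | r ∈ P ∧ ∀ x ∈ r.verts, x ∉ B} ∪ ({r | r ∈ Q ∧ ∀ x ∈ r.verts, x ∉ A} ∪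
    {r | ∃ p ∈ P, ∃ q ∈ Q, ∃ v, v ∈ PymMain.cpS B p ∧ v ∈ PymMain.tlS A q ∧ v ∈ A ∧ v ∈ B ∧
      r.verts = spliceVerts p q v}), ⟨?_, ?_⟩, ?_, ?_, ?_⟩
  · -- each member is a path and an X→Y path
    rintro r (⟨hr, _⟩ | ⟨hr, _⟩ | ⟨p, hp, q, hq, v, hvcp, hvtl, hvA, hvB, hr⟩)
    · exact hP1 r hr
    · exact hQ1 r hr
    · have h := PymMain.splice_path (hP1 p hp).1 (hP1 p hp).2 (hQ1 q hq).1 (hQ1 q hq).2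
        hvcp.1 hvtl.1 hr
      exact ⟨h.1, h.2.1⟩
  · -- pairwise disjoint
    rintro r₁ hr₁ r₂ hr₂ hne
    rw [Set.disjoint_left]
    intro x hx1 hx2
    have hx1' : x ∈ r₁.verts := hx1
    have hx2' : x ∈ r₂.verts := hx2
    -- helper cases
    have case12 : ∀ (s t : DiPath V), s ∈ P → (∀ y ∈ s.verts, y ∉ B) →
        (∀ y ∈ t.verts, y ∉ A) → x ∈ s.verts → x ∈ t.verts → False := by
      intro s t hs hsB htA hxs hxt
      exact htA x hxt (hPA s hs hsB x hxs)
    have case13 : ∀ (s : DiPath V), s ∈ P → (∀ y ∈ s.verts, y ∉ B) →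
        ∀ p ∈ P, ∀ q ∈ Q, ∀ v (t : DiPath V), v ∈ PymMain.cpS B p → v ∈ PymMain.tlS A q →
        v ∈ B → t.verts = spliceVerts p q v → x ∈ s.verts → x ∈ t.verts → False := by
      intro s hs hsB p hp q hq v t hvcp hvtl hvB ht hxs hxt
      rw [ht, PymMain.spliceVerts_eq] at hxt
      rcases List.mem_append.mp hxt with h|h
      · by_cases hps : p = s
        · subst hps
          exact hsB v hvcp.1 hvB
        · exact Set.disjoint_left.mp (hP2 p hp s hs hps) (PymAux.sb_subset h) hxs
      · exact hsB x hxs (hBint q hq x (hT1 q v hvtl x h))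
    have case23 : ∀ (s : DiPath V), s ∈ Q → (∀ y ∈ s.verts, y ∉ A) →
        ∀ p ∈ P, ∀ q ∈ Q, ∀ v (t : DiPath V), v ∈ PymMain.cpS B p → v ∈ PymMain.tlS A q →
        v ∈ A → t.verts = spliceVerts p q v → x ∈ s.verts → x ∈ t.verts → False := by
      intro s hs hsA p hp q hq v t hvcp hvtl hvA ht hxs hxt
      rw [ht, PymMain.spliceVerts_eq] at hxt
      rcases List.mem_append.mp hxt with h|h
      · exact hsA x hxs (hAint p hp x (hS1 p v hvcp x h))
      · by_cases hqs : q = s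
        · subst hqs
          exact hsA v hvtl.1 hvA
        · exact Set.disjoint_left.mp (hQ2 q hq s hs hqs) (PymAux.dw_subset h) hxs
    rcases hr₁ with ⟨hr1P, hr1B⟩ | ⟨hr1Q, hr1A⟩ | ⟨p₁, hp₁, q₁, hq₁, v₁, h1cp, h1tl, h1A, h1B, h1v⟩ <;>
      rcases hr₂ with ⟨hr2P, hr2B⟩ | ⟨hr2Q, hr2A⟩ | ⟨p₂, hp₂, q₂, hq₂, v₂, h2cp, h2tl, h2A, h2B, h2v⟩
    · exact Set.disjoint_left.mp (hP2 r₁ hr1P r₂ hr2P hne) hx1 hx2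
    · exact case12 r₁ r₂ hr1P hr1B hr2A hx1' hx2'
    · exact case13 r₁ hr1P hr1B p₂ hp₂ q₂ hq₂ v₂ r₂ h2cp h2tl h2B h2v hx1' hx2'
    · exact case12 r₂ r₁ hr2P hr2B hr1A hx2' hx1'
    · exact Set.disjoint_left.mp (hQ2 r₁ hr1Q r₂ hr2Q hne) hx1 hx2
    · exact case23 r₁ hr1Q hr1A p₂ hp₂ q₂ hq₂ v₂ r₂ h2cp h2tl h2A h2v hx1' hx2'
    · exact case13 r₂ hr2P hr2B p₁ hp₁ q₁ hq₁ v₁ r₁ h1cp h1tl h1B h1v hx2' hx1'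
    · exact case23 r₂ hr2Q hr2A p₁ hp₁ q₁ hq₁ v₁ r₁ h1cp h1tl h1A h1v hx2' hx1'
    · -- spliced vs spliced
      have hne' : ¬ (p₁ = p₂ ∧ q₁ = q₂ ∧ v₁ = v₂) := by
        rintro ⟨rfl, rfl, rfl⟩
        exact hne (PymMain.dipath_ext (h1v.trans h2v.symm))
      have hpne : p₁ ≠ p₂ := by
        rintro rfl
        have hv12 : v₁ = v₂ := hU1 p₁ v₁ v₂ h1cp h2cp h1B h2B
        subst hv12
        have hq12 : q₁ = q₂ := by
          by_contra hqne
          exact Set.disjoint_left.mp (hQ2 q₁ hq₁ q₂ hq₂ hqne) h1tl.1 h2tl.1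
        exact hne' ⟨rfl, hq12, rfl⟩
      have hqne : q₁ ≠ q₂ := by
        rintro rfl
        have hv12 : v₁ = v₂ := hU2 q₁ v₁ v₂ h1tl h2tl h1A h2A
        subst hv12
        have hp12 : p₁ = p₂ := by
          by_contra hpne'
          exact Set.disjoint_left.mp (hP2 p₁ hp₁ p₂ hp₂ hpne') h1cp.1 h2cp.1
        exact hne' ⟨hp12, rfl, rfl⟩
      rw [h1v, PymMain.spliceVerts_eq] at hx1'
      rw [h2v, PymMain.spliceVerts_eq] at hx2'
      rcases List.mem_append.mp hx1' with h1|h1 <;> rcases List.mem_append.mp hx2' with h2|h2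
      · exact Set.disjoint_left.mp (hP2 p₁ hp₁ p₂ hp₂ hpne)
          (PymAux.sb_subset h1) (PymAux.sb_subset h2)
      · exact h1cp.2 x h1 (hBint q₂ hq₂ x (hT1 q₂ v₂ h2tl x h2))
      · exact h2cp.2 x h2 (hBint q₁ hq₁ x (hT1 q₁ v₁ h1tl x h1))
      · exact Set.disjoint_left.mp (hQ2 q₁ hq₁ q₂ hq₂ hqne)
          (PymAux.dw_subset h1) (PymAux.dw_subset h2)
  · -- Vminus P ⊆ Vminus R
    rintro x ⟨p, hp, rfl⟩
    by_cases hB0 : ∃ y ∈ p.verts, y ∈ B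
    · obtain ⟨f, hf, hfB, hmin⟩ := PymAux.exists_min hB0
      have hfcp : f ∈ PymMain.cpS B p := ⟨hf, hmin⟩
      obtain ⟨q, hq, hftl⟩ := hBdec f hfB
      have hfA : f ∈ A := hAint p hp f hfcp
      have hdisj := hdisjPQ p q hq f hfcp hftl
      refine ⟨⟨spliceVerts p q f, PymMain.splice_ne hftl.1, PymMain.splice_nodup hdisj⟩, ?_, ?_⟩
      · right; right
        exact ⟨p, hp, q, hq, f, hfcp, hftl, hfA, hfB, rfl⟩
      · exact (PymMain.splice_path (hP1 p hp).1 (hP1 p hp).2 (hQ1 q hq).1 (hQ1 q hq).2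
          hfcp.1 hftl.1 rfl).2.2.1
    · exact ⟨p, Or.inl ⟨hp, fun y hy hyB => hB0 ⟨y, hy, hyB⟩⟩, rfl⟩
  · -- Vplus Q ⊆ Vplus R
    rintro x ⟨q, hq, rfl⟩
    by_cases hA0 : ∃ y ∈ q.verts, y ∈ A
    · obtain ⟨g, hg, hgA, hmax⟩ := PymAux.exists_max q.nodup hA0
      have hgtl : g ∈ PymMain.tlS A q := ⟨hg, fun z hzA hzq => hmax z hzq hzA⟩
      have hgB : g ∈ B := hBint q hq g hgtl
      obtain ⟨p, hp, hgcp⟩ := hAdec g hgA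
      have hdisj := hdisjPQ p q hq g hgcp hgtl
      refine ⟨⟨spliceVerts p q g, PymMain.splice_ne hgtl.1, PymMain.splice_nodup hdisj⟩, ?_, ?_⟩
      · right; right
        exact ⟨p, hp, q, hq, g, hgcp, hgtl, hgA, hgB, rfl⟩
      · exact (PymMain.splice_path (hP1 p hp).1 (hP1 p hp).2 (hQ1 q hq).1 (hQ1 q hq).2
          hgcp.1 hgtl.1 rfl).2.2.2
    · exact ⟨q, Or.inr (Or.inl ⟨hq, fun y hy hyA => hA0 ⟨y, hy, hyA⟩⟩), rfl⟩
  · -- form of the paths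
    rintro r (⟨hr, _⟩ | ⟨hr, _⟩ | ⟨p, hp, q, hq, v, hvcp, hvtl, hvA, hvB, hr⟩)
    · exact Or.inl (Or.inl hr)
    · exact Or.inl (Or.inr hr)
    · exact Or.inr ⟨p, hp, q, hq, v, ⟨hvcp.1, hvtl.1⟩, hr⟩
end

section
/- Suppose in a digraph D that the path-system 𝒫 links S to v (i.e. 𝒫 is a v-infan with V⁻(𝒫) = S) and 𝒬 is a v-infan with V(𝒬) ∩ S = V⁻(𝒬). Then there is a v-infan ℛ with V⁻(ℛ) = S covering E⁺(𝒬), and moreover each R ∈ ℛ is either in 𝒫 ∪ 𝒬 or there are P ∈ 𝒫, Q ∈ 𝒬 and a vertex v_R ∈ V(P) ∩ V(Q) such that R = P v_R Q. -/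
/-!
Common framework: a digraph on a vertex type `V` is given by its edge set
`D : Set (V × V)` (this automatically makes it simple in the sense of having
no parallel edges; absence of loops is the predicate `NoLoops`).
Paths are nonempty duplicate-free lists of vertices.
-/

universe u

variable {V : Type u}

set_option linter.unusedSectionVars false

namespace PymInfanAux
open List
variable [DecidableEq V]

theorem takeWhile_eq_take (l : List V) (w : V) :
    l.takeWhile (fun x => decide (x ≠ w)) = l.take (l.idxOf w) := by
  induction l with
  | nil => rfl
  | cons a t ih =>
      by_cases h : a = w
      · subst h
        simp [List.takeWhile_cons, List.idxOf_cons_self]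
      · simpa [List.takeWhile_cons, h, List.idxOf_cons_ne _ h] using ih

theorem dropWhile_eq_drop (l : List V) (w : V) :
    l.dropWhile (fun x => decide (x ≠ w)) = l.drop (l.idxOf w) := by
  induction l with
  | nil => rfl
  | cons a t ih =>
      by_cases h : a = w
      · subst h
        simp [List.dropWhile_cons, List.idxOf_cons_self]
      · simpa [List.dropWhile_cons, h, List.idxOf_cons_ne _ h] using ih

theorem mem_and_indexOf_lt_of_mem_take {l : List V} {n : ℕ} {z : V} (h : z ∈ l.take n) :
    z ∈ l ∧ l.idxOf z < n := by
  induction l generalizing n with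
  | nil => simp at h
  | cons a t ih =>
      cases n with
      | zero => simp at h
      | succ n =>
          rw [List.take_succ_cons, List.mem_cons] at h
          rcases h with h | h
          · subst h; simp
          · by_cases ha : a = z
            · subst ha; simp
            · obtain ⟨h1, h2⟩ := ih h
              exact ⟨List.mem_cons_of_mem _ h1, by rw [List.idxOf_cons_ne _ ha]; omega⟩

theorem mem_and_le_indexOf_of_mem_drop {l : List V} (hl : l.Nodup) {n : ℕ} {z : V}
    (h : z ∈ l.drop n) : z ∈ l ∧ n ≤ l.idxOf z := by
  induction l generalizing n with
  | nil => simp at h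
  | cons a t ih =>
      cases n with
      | zero => exact ⟨by simpa using h, Nat.zero_le _⟩
      | succ n =>
          rw [List.drop_succ_cons] at h
          obtain ⟨h1, h2⟩ := ih (List.nodup_cons.1 hl).2 h
          have ha : a ≠ z := fun e => (List.nodup_cons.1 hl).1 (e ▸ h1)
          exact ⟨List.mem_cons_of_mem _ h1, by rw [List.idxOf_cons_ne _ ha]; omega⟩

theorem mem_take_of_indexOf_lt {l : List V} {z : V} (hz : z ∈ l) {n : ℕ}
    (h : l.idxOf z < n) : z ∈ l.take n := by
  have hlen : l.idxOf z < l.length := List.idxOf_lt_length_iff.2 hz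
  have hh : l.idxOf z < (l.take n).length := by simp [List.length_take]; omega
  have : (l.take n)[l.idxOf z]'hh = z := by
    rw [List.getElem_take]; exact List.getElem_idxOf hlen
  exact this ▸ List.getElem_mem hh

theorem mem_drop_of_le_indexOf {l : List V} {z : V} (hz : z ∈ l) {n : ℕ}
    (h : n ≤ l.idxOf z) : z ∈ l.drop n := by
  have hlen : l.idxOf z < l.length := List.idxOf_lt_length_iff.2 hz
  have h2 : (l.drop n)[l.idxOf z - n]? = some z := by
    rw [List.getElem?_drop, show n + (l.idxOf z - n) = l.idxOf z by omega,
      List.getElem?_eq_getElem hlen, List.getElem_idxOf hlen]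
  exact List.mem_of_getElem? h2

theorem getLast?_drop_of_ne_nil {l : List V} {n : ℕ} (h : l.drop n ≠ []) :
    (l.drop n).getLast? = l.getLast? := by
  conv_rhs => rw [← List.take_append_drop n l]
  rw [List.getLast?_append]
  cases e : (l.drop n).getLast? with
  | none => exact absurd (List.getLast?_eq_none_iff.mp e) h
  | some a => rfl

theorem drop_pairs (l : List V) (n : ℕ) :
    ((l.zip l.tail).drop n) = (l.drop n).zip ((l.drop n).tail) := by
  induction l generalizing n with
  | nil => simp
  | cons a t ih =>
      cases n with
      | zero => simp
      | succ n =>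
          cases t with
          | nil => simp
          | cons b u =>
              show (((a, b) :: ((b :: u).zip u)).drop (n+1)) = _
              rw [List.drop_succ_cons, List.drop_succ_cons]
              have := ih n
              simpa using this
  
theorem mem_pairs_append {l₁ l₂ : List V} {e : V × V} (h : e ∈ l₂.zip l₂.tail) :
    e ∈ (l₁ ++ l₂).zip (l₁ ++ l₂).tail := by
  induction l₁ with
  | nil => simpa using h
  | cons a t ih =>
      rcases m : t ++ l₂ with _ | ⟨b, u⟩
      · have : l₂ = [] := by
          rcases List.append_eq_nil_iff.mp m with ⟨_, h2⟩; exact h2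
        subst this; simp at h
      · show e ∈ (a :: (t ++ l₂)).zip (t ++ l₂)
        rw [m] at ih ⊢
        show e ∈ (a, b) :: ((b :: u).zip u)
        exact List.mem_cons_of_mem _ ih


theorem head_indexOf {l : List V} (h : l ≠ []) : l.idxOf (l.head h) = 0 := by
  cases l with
  | nil => exact absurd rfl h
  | cons a t => simp

theorem eq_singleton_of_head_eq_getLast {l : List V} (h : l ≠ []) (hn : l.Nodup)
    (he : l.head h = l.getLast h) : l = [l.head h] := by
  cases l with
  | nil => exact absurd rfl h
  | cons a t =>
      cases t with
      | nil => simp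
      | cons b u =>
          exfalso
          have hg : (a :: b :: u).getLast (by simp) = (b :: u).getLast (by simp) :=
            List.getLast_cons (by simp)
          rw [List.head_cons] at he
          have : a ∈ b :: u := by rw [he, hg]; exact List.getLast_mem _
          exact (List.nodup_cons.1 hn).1 this

theorem indexOf_getLast {l : List V} (h : l ≠ []) (hn : l.Nodup) :
    l.idxOf (l.getLast h) = l.length - 1 := by
  have h0 : l.length - 1 < l.length := by
    cases l with
    | nil => exact absurd rfl h
    | cons a t => simp
  have hlt : l.idxOf (l.getLast h) < l.length :=
    List.idxOf_lt_length_iff.2 (List.getLast_mem h)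
  have h2 : l[l.idxOf (l.getLast h)]'hlt = l[l.length - 1]'h0 := by
    rw [List.getElem_idxOf hlt, List.getLast_eq_getElem]
  exact (List.Nodup.getElem_inj_iff hn).1 h2

theorem indexOf_lt_pred {l : List V} (h : l ≠ []) (hn : l.Nodup) {w : V} (hw : w ∈ l)
    (hne : w ≠ l.getLast h) : l.idxOf w < l.length - 1 := by
  have hlt : l.idxOf w < l.length := List.idxOf_lt_length_iff.2 hw
  rcases Nat.lt_or_ge (l.idxOf w) (l.length - 1) with h1 | h1
  · exact h1
  · exfalso
    have : l.idxOf w = l.length - 1 := by omega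
    rw [← indexOf_getLast h hn] at this
    exact hne ((List.idxOf_inj hw (y := l.getLast h)).1 this)

theorem indexOf_inj' {l : List V} {a b : V} (ha : a ∈ l) (hb : b ∈ l)
    (h : l.idxOf a = l.idxOf b) : a = b := (List.idxOf_inj ha (y := b)).1 h

theorem dipath_ext {p q : DiPath V} (h : p.verts = q.verts) : p = q := by
  cases p; cases q; simpa using h

open Classical in
noncomputable def legO (P : Set (DiPath V)) (w : V) : DiPath V :=
  if h : ∃ p ∈ P, w ∈ p.verts then h.choose else ⟨[w], by simp, by simp⟩

theorem legO_spec {P : Set (DiPath V)} {w : V} (h : ∃ p ∈ P, w ∈ p.verts) :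
    legO P w ∈ P ∧ w ∈ (legO P w).verts := by
  classical
  rw [legO, dif_pos h]
  exact ⟨h.choose_spec.1, h.choose_spec.2⟩

noncomputable def idxL (P : Set (DiPath V)) (w : V) : ℕ := (legO P w).verts.idxOf w

def Wset (v : V) (P Q : Set (DiPath V)) : Set V :=
  {w | w ≠ v ∧ (∃ p ∈ P, w ∈ p.verts) ∧ (∃ q ∈ Q, w ∈ q.verts)}

def QI (v : V) (Q : Set (DiPath V)) := {q : DiPath V // q ∈ Q ∧ q.first ≠ v}

noncomputable def UsetX (v : V) (P Q : Set (DiPath V)) (x : QI v Q → ℕ∞) : Set V :=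
  {u | u ∈ Wset v P Q ∧ ∃ q : QI v Q, u ∈ q.1.verts ∧ x q ≤ (q.1.verts.idxOf u : ℕ∞)}

noncomputable def CandX (v : V) (P Q : Set (DiPath V)) (x : QI v Q → ℕ∞) (q : QI v Q) :
    Set V :=
  {w | w ∈ Wset v P Q ∧ w ∈ q.1.verts ∧
    ∀ u ∈ UsetX v P Q x, legO P u = legO P w → idxL P w ≤ idxL P u}

theorem UsetX_anti {v : V} {P Q : Set (DiPath V)} {x y : QI v Q → ℕ∞} (hxy : x ≤ y) :
    UsetX v P Q y ⊆ UsetX v P Q x := by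
  rintro u ⟨hW, q, hmem, hle⟩
  exact ⟨hW, q, hmem, le_trans (hxy q) hle⟩

noncomputable def Fop (v : V) (P Q : Set (DiPath V)) : (QI v Q → ℕ∞) →o (QI v Q → ℕ∞) where
  toFun x q := sSup ((fun w => (q.1.verts.idxOf w : ℕ∞)) '' CandX v P Q x q)
  monotone' := by
    intro x y hxy q
    apply sSup_le_sSup
    apply Set.image_mono
    rintro w ⟨h1, h2, h3⟩
    exact ⟨h1, h2, fun u hu hleg => h3 u (UsetX_anti hxy hu) hleg⟩



theorem head?_take_drop (l m : List V) (hl : l ≠ []) (i : ℕ) {n : ℕ} (hm : n < m.length)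
    (hkey : i = 0 → m[n] = l.head hl) :
    (l.take i ++ m.drop n).head? = some (l.head hl) := by
  cases i with
  | zero =>
      simp only [List.take_zero, List.nil_append, List.head?_drop]
      rw [List.getElem?_eq_getElem hm, hkey rfl]
  | succ i =>
      cases l with
      | nil => exact absurd rfl hl
      | cons a t => simp


theorem head_eq_of_indexOf_eq_zero {l : List V} (h : l ≠ []) {a : V} (ha : a ∈ l)
    (h0 : l.idxOf a = 0) : l.head h = a := by
  cases l with
  | nil => exact absurd rfl h
  | cons b t =>
      by_cases hb : b = a
      · simpa using hb
      · rw [List.idxOf_cons_ne _ hb] at h0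
        simp at h0

theorem mem_of_getLast?_eq {l : List V} {a : V} (h : l.getLast? = some a) : a ∈ l := by
  cases l with
  | nil => simp at h
  | cons b t =>
      rw [List.getLast?_eq_getLast (l := b :: t) (by simp)] at h
      have : a = (b :: t).getLast (by simp) := (Option.some.inj h).symm
      rw [this]
      exact List.getLast_mem _

end PymInfanAux

open PymInfanAux in


/-- A Pym-type corollary for infans: if `P` links `S` to `v` and `Q` is a `v`-infan
with `V(Q) ∩ S = V⁻(Q)`, then there is a `v`-infan `R` with `V⁻(R) = S` covering
`E⁺(Q)`, each of whose paths is in `P ∪ Q` or of the form `P₀ w Q₀`. -/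
theorem pym_infan [DecidableEq V] (D : Set (V × V)) (hsimple : NoLoops D)
    (v : V) (S : Set V) (P Q : Set (DiPath V))
    (hP : Infan D v P) (hPS : Vminus P = S)
    (hQ : Infan D v Q) (hQS : vertsOf Q ∩ S = Vminus Q) :
    ∃ R, Infan D v R ∧ Vminus R = S ∧ Eplus Q ⊆ edgesOf R ∧
      ∀ p ∈ R, p ∈ P ∪ Q ∨
        ∃ p' ∈ P, ∃ q' ∈ Q, ∃ w ∈ p'.vertexSet ∩ q'.vertexSet,
          p.verts = spliceVerts p' q' w := by
  classical
  obtain ⟨hP1, hP2⟩ := hP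
  obtain ⟨hQ1, hQ2⟩ := hQ
  -- basic uniqueness facts
  have huniqP : ∀ {w : V} {p p' : DiPath V}, w ≠ v → p ∈ P → p' ∈ P →
      w ∈ p.verts → w ∈ p'.verts → p = p' := by
    intro w p p' hw hp hp' hwp hwp'
    by_contra hne
    have h := hP2 p hp p' hp' hne
    have : w ∈ p.vertexSet ∩ p'.vertexSet := ⟨hwp, hwp'⟩
    rw [h] at this
    exact hw this
  have huniqQ : ∀ {w : V} {q q' : DiPath V}, w ≠ v → q ∈ Q → q' ∈ Q →
      w ∈ q.verts → w ∈ q'.verts → q = q' := by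
    intro w q q' hw hq hq' hwq hwq'
    by_contra hne
    have h := hQ2 q hq q' hq' hne
    have : w ∈ q.vertexSet ∩ q'.vertexSet := ⟨hwq, hwq'⟩
    rw [h] at this
    exact hw this
  have hlegO : ∀ {w : V} {p : DiPath V}, w ≠ v → p ∈ P → w ∈ p.verts → legO P w = p := by
    intro w p hw hp hwp
    obtain ⟨h1, h2⟩ := legO_spec ⟨p, hp, hwp⟩
    exact huniqP hw h1 hp h2 hwp
  have hPfirstS : ∀ p ∈ P, p.first ∈ S := fun p hp => hPS ▸ ⟨p, hp, rfl⟩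
  have hSfirst : ∀ s ∈ S, ∃ p ∈ P, p.first = s := by
    intro s hs
    rw [← hPS] at hs
    obtain ⟨p, hp, he⟩ := hs
    exact ⟨p, hp, he⟩
  have hQfirstS : ∀ q ∈ Q, q.first ∈ S := by
    intro q hq
    have h1 : q.first ∈ Vminus Q := ⟨q, hq, rfl⟩
    rw [← hQS] at h1
    exact h1.2
  have hlastP : ∀ p ∈ P, p.verts.getLast p.ne = v := fun p hp => (hP1 p hp).2
  have hlastQ : ∀ q ∈ Q, q.verts.getLast q.ne = v := fun q hq => (hQ1 q hq).2
  -- the fixed point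
  set x : QI v Q → ℕ∞ := OrderHom.lfp (Fop v P Q) with hxdef
  have hfix : Fop v P Q x = x := OrderHom.map_lfp (Fop v P Q)
  -- first vertices of nontrivial Q-paths are candidates
  have hcand0 : ∀ q : QI v Q, q.1.first ∈ CandX v P Q x q := by
    intro q
    obtain ⟨hq, hqv⟩ := q.2
    have hfS : q.1.first ∈ S := hQfirstS q.1 hq
    obtain ⟨p, hp, hpf⟩ := hSfirst _ hfS
    have hfp : q.1.first ∈ p.verts := by
      rw [← hpf]; exact List.head_mem p.ne
    have hfq : q.1.first ∈ q.1.verts := List.head_mem q.1.ne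
    have hW : q.1.first ∈ Wset v P Q := ⟨hqv, ⟨p, hp, hfp⟩, ⟨q.1, hq, hfq⟩⟩
    have hlzero : idxL P q.1.first = 0 := by
      rw [idxL, hlegO hqv hp hfp, ← hpf]
      exact head_indexOf p.ne
    exact ⟨hW, hfq, fun u hu hleg => by rw [hlzero]; exact Nat.zero_le _⟩
  have hcut : ∀ q : QI v Q, ∃ w, w ∈ CandX v P Q x q ∧
      ((q.1.verts.idxOf w : ℕ∞)) = x q := by
    intro q
    have hne : ((fun w => ((q.1.verts.idxOf w : ℕ∞))) '' CandX v P Q x q).Nonempty :=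
      ⟨_, Set.mem_image_of_mem _ (hcand0 q)⟩
    have hfin : ((fun w => ((q.1.verts.idxOf w : ℕ∞))) '' CandX v P Q x q).Finite :=
      ((q.1.verts.finite_toSet).subset (fun w hw => hw.2.1)).image _
    have hmem := hne.csSup_mem hfin
    have hx : x q = sSup ((fun w => ((q.1.verts.idxOf w : ℕ∞))) '' CandX v P Q x q) := by
      conv_lhs => rw [← hfix]
      rfl
    rw [← hx] at hmem
    obtain ⟨w, hw, he⟩ := hmem
    exact ⟨w, hw, he⟩
  choose cw hcwC hcwX using hcut
  have hcwW : ∀ q : QI v Q, cw q ∈ Wset v P Q := fun q => (hcwC q).1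
  have hcwQmem : ∀ q : QI v Q, cw q ∈ q.1.verts := fun q => (hcwC q).2.1
  have hcwcond : ∀ q : QI v Q, ∀ u ∈ UsetX v P Q x,
      legO P u = legO P (cw q) → idxL P (cw q) ≤ idxL P u := fun q => (hcwC q).2.2
  have hcwv : ∀ q : QI v Q, cw q ≠ v := fun q => (hcwW q).1
  have hlegmem : ∀ w ∈ Wset v P Q, legO P w ∈ P ∧ w ∈ (legO P w).verts :=
    fun w hw => legO_spec hw.2.1
  have hcwU : ∀ q : QI v Q, cw q ∈ UsetX v P Q x :=
    fun q => ⟨hcwW q, q, hcwQmem q, le_of_eq (hcwX q).symm⟩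
  -- cuts on distinct Q-paths use distinct legs
  have hcut_inj : ∀ q q' : QI v Q, legO P (cw q) = legO P (cw q') → q = q' := by
    intro q q' hleg
    have h1 := hcwcond q (cw q') (hcwU q') hleg.symm
    have h2 := hcwcond q' (cw q) (hcwU q) hleg
    have heq : idxL P (cw q) = idxL P (cw q') := le_antisymm h1 h2
    have hm1 : cw q ∈ (legO P (cw q)).verts := (hlegmem _ (hcwW q)).2
    have hm2 : cw q' ∈ (legO P (cw q)).verts := by
      rw [hleg]; exact (hlegmem _ (hcwW q')).2
    have : cw q = cw q' := by
      apply indexOf_inj' hm1 hm2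
      have := heq
      rw [idxL, idxL, ← hleg] at this
      exact this
    have hq : q.1 = q'.1 :=
      huniqQ (hcwv q) q.2.1 q'.2.1 (hcwQmem q) (this ▸ hcwQmem q')
    exact Subtype.ext hq
  -- every vertex of the used region has its leg cut at or before it
  have hU_leg_cut : ∀ u ∈ UsetX v P Q x, ∃ q : QI v Q,
      legO P (cw q) = legO P u ∧ idxL P (cw q) ≤ idxL P u := by
    intro u hu
    set A := {n : ℕ | ∃ z ∈ UsetX v P Q x, legO P z = legO P u ∧ idxL P z = n} with hA
    have hAne : A.Nonempty := ⟨idxL P u, u, hu, rfl, rfl⟩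
    obtain ⟨z, hzU, hzleg, hzidx⟩ := Nat.sInf_mem hAne
    obtain ⟨hzW, q0, hzq, hzle⟩ := hzU
    have hzU' : z ∈ UsetX v P Q x := ⟨hzW, q0, hzq, hzle⟩
    rcases eq_or_lt_of_le hzle with he | hl
    · have hcz : cw q0 = z := by
        apply indexOf_inj' (hcwQmem q0) hzq
        have h2 : ((q0.1.verts.idxOf (cw q0) : ℕ∞)) = ((q0.1.verts.idxOf z : ℕ∞)) := by
          rw [hcwX q0, he]
        exact_mod_cast h2
      refine ⟨q0, by rw [hcz, hzleg], ?_⟩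
      rw [hcz, hzidx]
      exact Nat.sInf_le ⟨u, hu, rfl, rfl⟩
    · exfalso
      have hnc : z ∉ CandX v P Q x q0 := by
        intro hc
        have hle2 : ((q0.1.verts.idxOf z : ℕ∞)) ≤ x q0 := by
          conv_rhs => rw [← hfix]
          exact le_sSup (Set.mem_image_of_mem _ hc)
        exact absurd hle2 (not_le.2 hl)
      have hex : ∃ u', u' ∈ UsetX v P Q x ∧ legO P u' = legO P z ∧ idxL P u' < idxL P z := by
        by_contra hno
        push_neg at hno
        exact hnc ⟨hzW, hzq, fun u' hu' hleg => hno u' hu' hleg⟩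
      obtain ⟨u', hu', hleg', hlt'⟩ := hex
      have hmem : idxL P u' ∈ A := ⟨u', hu', by rw [hleg', hzleg], rfl⟩
      have := Nat.sInf_le hmem
      omega
  -- the spliced vertex lists
  set Rv : QI v Q → List V := fun q =>
    (legO P (cw q)).verts.take (idxL P (cw q)) ++
      q.1.verts.drop (q.1.verts.idxOf (cw q)) with hRvdef
  -- facts about the two pieces
  have hlegP : ∀ q : QI v Q, legO P (cw q) ∈ P := fun q => (hlegmem _ (hcwW q)).1
  have hcwleg : ∀ q : QI v Q, cw q ∈ (legO P (cw q)).verts := fun q => (hlegmem _ (hcwW q)).2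
  have hidxlt : ∀ q : QI v Q, idxL P (cw q) < (legO P (cw q)).verts.length :=
    fun q => List.idxOf_lt_length_iff.2 (hcwleg q)
  have hnlt : ∀ q : QI v Q, q.1.verts.idxOf (cw q) < q.1.verts.length :=
    fun q => List.idxOf_lt_length_iff.2 (hcwQmem q)
  have hcw_mem_tl : ∀ q : QI v Q, cw q ∈ q.1.verts.drop (q.1.verts.idxOf (cw q)) :=
    fun q => mem_drop_of_le_indexOf (hcwQmem q) le_rfl
  have htl_ne : ∀ q : QI v Q, q.1.verts.drop (q.1.verts.idxOf (cw q)) ≠ [] :=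
    fun q => List.ne_nil_of_mem (hcw_mem_tl q)
  have hv_mem_tl : ∀ q : QI v Q, v ∈ q.1.verts.drop (q.1.verts.idxOf (cw q)) := by
    intro q
    have hvq : v ∈ q.1.verts := by
      have := List.getLast_mem q.1.ne
      rwa [hlastQ q.1 q.2.1] at this
    apply mem_drop_of_le_indexOf hvq
    have h1 : q.1.verts.idxOf v = q.1.verts.length - 1 := by
      have := indexOf_getLast q.1.ne q.1.nodup
      rwa [hlastQ q.1 q.2.1] at this
    have h2 : q.1.verts.idxOf (cw q) < q.1.verts.length - 1 :=
      indexOf_lt_pred q.1.ne q.1.nodup (hcwQmem q)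
        (fun h => hcwv q (h.trans (hlastQ q.1 q.2.1)))
    omega
  -- properties of members of the prefix part
  have hpre_mem : ∀ (q : QI v Q) (z : V),
      z ∈ (legO P (cw q)).verts.take (idxL P (cw q)) →
      z ∈ (legO P (cw q)).verts ∧ z ≠ v ∧ legO P z = legO P (cw q) ∧
        idxL P z < idxL P (cw q) := by
    intro q z hz
    obtain ⟨hz1, hz2⟩ := mem_and_indexOf_lt_of_mem_take hz
    have hzv : z ≠ v := by
      intro he
      have h1 := indexOf_getLast (legO P (cw q)).ne (legO P (cw q)).nodup
      rw [hlastP _ (hlegP q)] at h1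
      rw [he] at hz2
      have h3 := hidxlt q
      omega
    have hzleg : legO P z = legO P (cw q) := hlegO hzv (hlegP q) hz1
    refine ⟨hz1, hzv, hzleg, ?_⟩
    rw [idxL, hzleg]
    exact hz2
  -- members of the tail part belonging to V(P) are in the used region
  have htlU : ∀ (q : QI v Q) (z : V),
      z ∈ q.1.verts.drop (q.1.verts.idxOf (cw q)) → z ≠ v →
      (∃ p ∈ P, z ∈ p.verts) → z ∈ UsetX v P Q x := by
    intro q z hz hzv hp
    obtain ⟨hz1, hz2⟩ := mem_and_le_indexOf_of_mem_drop q.1.nodup hz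
    refine ⟨⟨hzv, hp, ⟨q.1, q.2.1, hz1⟩⟩, q, hz1, ?_⟩
    rw [← hcwX q]
    exact_mod_cast hz2
  have htl_sub : ∀ (q : QI v Q) (z : V),
      z ∈ q.1.verts.drop (q.1.verts.idxOf (cw q)) → z ∈ q.1.verts :=
    fun q z hz => (mem_and_le_indexOf_of_mem_drop q.1.nodup hz).1
  -- the key disjointness: prefix of a cut leg never meets the used region
  have hkey : ∀ (q : QI v Q) (z : V),
      z ∈ (legO P (cw q)).verts.take (idxL P (cw q)) → z ∈ UsetX v P Q x → False := by
    intro q z hz hzU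
    obtain ⟨hz1, hzv, hzleg, hzlt⟩ := hpre_mem q z hz
    have := hcwcond q z hzU hzleg
    omega
  -- nodup and nonempty
  have hRv_ne : ∀ q : QI v Q, Rv q ≠ [] := by
    intro q h
    exact htl_ne q (List.append_eq_nil_iff.1 h).2
  have hRv_nd : ∀ q : QI v Q, (Rv q).Nodup := by
    intro q
    refine List.nodup_append.2 ⟨List.Nodup.sublist (List.take_sublist _ _) (legO P (cw q)).nodup,
      List.Nodup.sublist (List.drop_sublist _ _) q.1.nodup, ?_⟩
    intro z hz1 b hz2 hzb
    subst hzb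
    obtain ⟨hm, hzv, hzleg, hzlt⟩ := hpre_mem q z hz1
    exact hkey q z hz1 (htlU q z hz2 hzv ⟨legO P (cw q), hlegP q, hm⟩)
  have hRex : ∀ q : QI v Q, ∃ r : DiPath V, r.verts = Rv q :=
    fun q => ⟨⟨Rv q, hRv_ne q, hRv_nd q⟩, rfl⟩
  choose Rp hRp using hRex
  -- basic properties of the spliced paths
  have hRp_last : ∀ q : QI v Q, (Rp q).last = v := by
    intro q
    have h1 : (Rp q).verts.getLast? = some v := by
      rw [hRp q, hRvdef]
      rw [List.getLast?_append, getLast?_drop_of_ne_nil (htl_ne q),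
        List.getLast?_eq_getLast q.1.ne, hlastQ q.1 q.2.1]
      rfl
    have h2 := List.getLast?_eq_getLast (Rp q).ne
    rw [h2] at h1
    exact Option.some.inj h1
  have hRp_first : ∀ q : QI v Q, (Rp q).first = (legO P (cw q)).first := by
    intro q
    have h1 : (Rp q).verts.head? = some ((legO P (cw q)).verts.head (legO P (cw q)).ne) := by
      rw [hRp q, hRvdef]
      apply head?_take_drop _ _ _ _ (hnlt q)
      intro h0
      have hge : q.1.verts[q.1.verts.idxOf (cw q)]'(hnlt q) = cw q := List.getElem_idxOf (hnlt q)
      rw [hge]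
      have h2 : (legO P (cw q)).verts.idxOf (cw q) = 0 := h0
      exact (head_eq_of_indexOf_eq_zero (legO P (cw q)).ne (hcwleg q) h2).symm
    have h2 := List.head?_eq_head (l := (Rp q).verts) (Rp q).ne
    rw [h2] at h1
    exact Option.some.inj h1
  have hRp_path : ∀ q : QI v Q, IsPathIn D (Rp q) := by
    intro q
    have hch : List.Chain' (fun a b => (a, b) ∈ D) (Rv q) := by
      rw [hRvdef]
      refine List.isChain_append.2 ⟨List.IsChain.take (hP1 _ (hlegP q)).1 _,
        List.IsChain.drop (hQ1 _ q.2.1).1 _, ?_⟩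
      intro a ha b hb
      rw [List.head?_drop, List.getElem?_eq_getElem (hnlt q), List.getElem_idxOf (hnlt q)] at hb
      have hb' : b = cw q := by cases hb; rfl
      subst hb'
      set ℓ := legO P (cw q) with hℓ
      set i := idxL P (cw q) with hi
      have hQlt : i < ℓ.verts.length := hidxlt q
      have hpre_ne : ℓ.verts.take i ≠ [] := by
        intro h; rw [h] at ha; simp at ha
      have hipos : 0 < i := by
        rcases Nat.eq_zero_or_pos i with h | h
        · exfalso; apply hpre_ne; rw [h]; simp
        · exact h
      obtain ⟨j, hj⟩ : ∃ j, i = j + 1 := ⟨i - 1, by omega⟩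
      have hlen : (ℓ.verts.take i).length = i := by
        rw [List.length_take]; exact Nat.min_eq_left (le_of_lt hQlt)
      have ha' : a = ℓ.verts[j]'(by omega) := by
        have h3 := List.getLast?_eq_getLast hpre_ne
        rw [h3] at ha
        have h4 : a = (ℓ.verts.take i).getLast hpre_ne := by cases ha; rfl
        rw [h4, List.getLast_eq_getElem]
        rw [List.getElem_take]
        congr 1
        omega
      have hchain := (hP1 _ (hlegP q)).1
      rw [IsPathIn] at hchain
      rw [← hℓ] at hchain
      replace hchain := List.isChain_iff_getElem.1 hchain
      have h5 := hchain j (by omega)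
      have hgi : ℓ.verts[i]'hQlt = cw q := List.getElem_idxOf hQlt
      have h7 : ℓ.verts[j+1]'(by omega) = ℓ.verts[i]'hQlt := by congr 1; omega
      subst ha'
      convert h5 using 2
      exact (h7.trans hgi).symm
    rw [IsPathIn, hRp q]
    exact hch
  -- the final system
  set R : Set (DiPath V) :=
    {r | (∃ q : QI v Q, r = Rp q) ∨ (r ∈ P ∧ ∀ q : QI v Q, legO P (cw q) ≠ r)} with hRdef
  have hv_mem_Rp : ∀ q : QI v Q, v ∈ (Rp q).verts := by
    intro q
    rw [hRp q, hRvdef, List.mem_append]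
    exact Or.inr (hv_mem_tl q)
  have hv_mem_P : ∀ p ∈ P, v ∈ p.verts := by
    intro p hp
    rw [← hlastP p hp]
    exact List.getLast_mem p.ne
  -- disjointness of two spliced paths
  have hdisj_RR : ∀ q q' : QI v Q, q ≠ q' → ∀ z, z ∈ (Rp q).verts → z ∈ (Rp q').verts →
      z = v := by
    intro q q' hne z hz hz'
    by_contra hzv
    rw [hRp q, hRvdef, List.mem_append] at hz
    rw [hRp q', hRvdef, List.mem_append] at hz'
    rcases hz with hz | hz <;> rcases hz' with hz' | hz'
    · obtain ⟨hm, _, hzleg, _⟩ := hpre_mem q z hz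
      obtain ⟨hm', _, hzleg', _⟩ := hpre_mem q' z hz'
      exact hne (hcut_inj q q' (by rw [← hzleg, ← hzleg']))
    · obtain ⟨hm, _, hzleg, _⟩ := hpre_mem q z hz
      exact hkey q z hz (htlU q' z hz' hzv ⟨legO P (cw q), hlegP q, hm⟩)
    · obtain ⟨hm', _, hzleg', _⟩ := hpre_mem q' z hz'
      exact hkey q' z hz' (htlU q z hz hzv ⟨legO P (cw q'), hlegP q', hm'⟩)
    · have h1 := htl_sub q z hz
      have h2 := htl_sub q' z hz'
      have : q.1 = q'.1 := huniqQ hzv q.2.1 q'.2.1 h1 h2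
      exact hne (Subtype.ext this)
  -- disjointness of a spliced path and an uncut pure leg
  have hdisj_RP : ∀ (q : QI v Q) (p : DiPath V), p ∈ P → (∀ q' : QI v Q, legO P (cw q') ≠ p) →
      ∀ z, z ∈ (Rp q).verts → z ∈ p.verts → z = v := by
    intro q p hp hunc z hz hzp
    by_contra hzv
    rw [hRp q, hRvdef, List.mem_append] at hz
    rcases hz with hz | hz
    · obtain ⟨hm, _, hzleg, _⟩ := hpre_mem q z hz
      have : legO P z = p := hlegO hzv hp hzp
      exact hunc q (by rw [← hzleg, this])
    · have hU := htlU q z hz hzv ⟨p, hp, hzp⟩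
      obtain ⟨q', hleg', _⟩ := hU_leg_cut z hU
      have : legO P z = p := hlegO hzv hp hzp
      exact hunc q' (by rw [hleg', this])
  refine ⟨R, ⟨?_, ?_⟩, ?_, ?_, ?_⟩
  · -- paths in D ending at v
    rintro r (⟨q, rfl⟩ | ⟨hrP, _⟩)
    · exact ⟨hRp_path q, hRp_last q⟩
    · exact hP1 r hrP
  · -- pairwise intersections
    rintro r hr r' hr' hne
    apply Set.eq_singleton_iff_unique_mem.2
    constructor
    · constructor
      · rcases hr with ⟨q, rfl⟩ | ⟨hrP, _⟩
        · exact hv_mem_Rp q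
        · exact hv_mem_P r hrP
      · rcases hr' with ⟨q, rfl⟩ | ⟨hrP, _⟩
        · exact hv_mem_Rp q
        · exact hv_mem_P r' hrP
    · rintro z ⟨hz, hz'⟩
      rcases hr with ⟨q, rfl⟩ | ⟨hrP, hrunc⟩ <;> rcases hr' with ⟨q', rfl⟩ | ⟨hrP', hrunc'⟩
      · exact hdisj_RR q q' (fun h => hne (by rw [h])) z hz hz'
      · exact hdisj_RP q r' hrP' hrunc' z hz hz'
      · exact hdisj_RP q' r hrP hrunc z hz' hz
      · by_contra hzv
        have := huniqP hzv hrP hrP' hz hz'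
        exact hne this
  · -- V⁻(R) = S
    apply Set.eq_of_subset_of_subset
    · rintro s ⟨r, hr, rfl⟩
      rcases hr with ⟨q, rfl⟩ | ⟨hrP, _⟩
      · rw [hRp_first q]
        exact hPfirstS _ (hlegP q)
      · exact hPfirstS r hrP
    · intro s hs
      obtain ⟨p, hp, hpf⟩ := hSfirst s hs
      by_cases hc : ∃ q : QI v Q, legO P (cw q) = p
      · obtain ⟨q, hq⟩ := hc
        refine ⟨Rp q, Or.inl ⟨q, rfl⟩, ?_⟩
        rw [hRp_first q, hq, hpf]
      · push_neg at hc
        exact ⟨p, Or.inr ⟨hp, hc⟩, hpf⟩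
  · -- E⁺(Q) ⊆ edges of R
    rintro e ⟨q, hq, hqe⟩
    have hqv : q.first ≠ v := by
      intro h
      have hsing : q.verts = [q.verts.head q.ne] := by
        apply eq_singleton_of_head_eq_getLast q.ne q.nodup
        rw [hlastQ q hq]
        exact h
      rw [DiPath.lastEdge, hsing] at hqe
      simp at hqe
    set qI : QI v Q := ⟨q, hq, hqv⟩ with hqI
    have hcov : e ∈ (Rp qI).edges := by
      rw [DiPath.edges, Set.mem_setOf, hRp qI, hRvdef]
      apply mem_pairs_append
      rw [← drop_pairs]
      apply mem_of_getLast?_eq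
      rw [getLast?_drop_of_ne_nil]
      · exact hqe
      · have h1 : (q.verts.zip q.verts.tail).length = q.verts.length - 1 := by
          rw [List.length_zip, List.length_tail]
          omega
        have h2 : q.verts.idxOf (cw qI) < q.verts.length - 1 := by
          apply indexOf_lt_pred q.ne q.nodup (hcwQmem qI)
          rw [hlastQ q hq]
          exact hcwv qI
        intro hnil
        have := List.length_eq_zero_iff.2 hnil
        rw [List.length_drop] at this
        have hq1 : (qI.1).verts = q.verts := rfl
        rw [hq1] at this
        rw [h1] at this
        omega
    exact Set.mem_biUnion (Or.inl ⟨qI, rfl⟩) hcov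
  · -- form of the paths
    rintro r (⟨q, rfl⟩ | ⟨hrP, _⟩)
    · right
      refine ⟨legO P (cw q), hlegP q, q.1, q.2.1, cw q, ⟨hcwleg q, hcwQmem q⟩, ?_⟩
      rw [hRp q, hRvdef, spliceVerts, takeWhile_eq_take, dropWhile_eq_drop]
      rfl
    · exact Or.inl (Or.inl hrP)
end

section
/- Suppose in a rooted digraph D that 𝒫 is a system of S→v paths with v ∉ S such that V(P₀) ∩ V(P₁) − v ⊆ {r} for every two distinct P₀, P₁ ∈ 𝒫, and suppose 𝒬 is a v-infan with V(𝒬) ∩ S = V⁻(𝒬). Then there is a system ℛ of S→v paths with V(R₀) ∩ V(R₁) − v ⊆ {r} for every two distinct R₀, R₁ ∈ ℛ, covering V⁻(𝒫) ∪ E⁺(𝒬), such that each R ∈ ℛ is either in 𝒫 ∪ 𝒬 or there are P ∈ 𝒫, Q ∈ 𝒬 and a vertex v_R ∈ V(P) ∩ V(Q) with R = P v_R Q. -/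
/-!
Common framework: a digraph on a vertex type `V` is given by its edge set
`D : Set (V × V)` (this automatically makes it simple in the sense of having
no parallel edges; absence of loops is the predicate `NoLoops`).
Paths are nonempty duplicate-free lists of vertices.
-/

universe u

variable {V : Type u}

set_option linter.unusedSectionVars false


section Matching
variable {α : Type u} {β : Type*}

open Classical in
theorem exists_stable_matching (H : Set α) (pP pQ : α → β) (posP posQ : α → ℕ)
    (hfinP : ∀ z ∈ H, {y ∈ H | pP y = pP z}.Finite)
    (hfinQ : ∀ z ∈ H, {y ∈ H | pQ y = pQ z}.Finite)
    (hinjP : ∀ y ∈ H, ∀ z ∈ H, pP y = pP z → posP y = posP z → y = z)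
    (hinjQ : ∀ y ∈ H, ∀ z ∈ H, pQ y = pQ z → posQ y = posQ z → y = z) :
    ∃ M ⊆ H, (∀ y ∈ M, ∀ z ∈ M, pP y = pP z → y = z) ∧
      (∀ y ∈ M, ∀ z ∈ M, pQ y = pQ z → y = z) ∧
      (∀ z ∈ H, (∃ m ∈ M, pP m = pP z ∧ posP m ≤ posP z) ∨
        (∃ m ∈ M, pQ m = pQ z ∧ posQ z ≤ posQ m)) := by
  classical
  -- the Gale–Shapley stages
  let A : ℕ → Set α := fun n => Nat.rec H
    (fun _ An => {z | z ∈ An ∧ ¬ ∃ y, y ∈ An ∧ (∀ w ∈ An, pP w = pP y → posP y ≤ posP w) ∧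
      pQ y = pQ z ∧ posQ z < posQ y}) n
  have hA0 : A 0 = H := rfl
  have hAsucc : ∀ n, A (n+1) = {z | z ∈ A n ∧ ¬ ∃ y, y ∈ A n ∧
      (∀ w ∈ A n, pP w = pP y → posP y ≤ posP w) ∧ pQ y = pQ z ∧ posQ z < posQ y} := fun n => rfl
  have hsub : ∀ n, A (n+1) ⊆ A n := fun n z hz => hz.1
  have hmono : ∀ m n, m ≤ n → A n ⊆ A m := by
    intro m n h
    induction h with
    | refl => exact fun _ h => h
    | step h ih => exact fun z hz => (by exact ih (hsub _ hz))
  have hAH : ∀ n, A n ⊆ H := fun n => by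
    rw [← hA0]; exact hmono 0 n (Nat.zero_le n)
  set Ainf : Set α := ⋂ n, A n with hAinf
  have hAinfsub : ∀ n, Ainf ⊆ A n := fun n => Set.iInter_subset _ n
  have hAinfH : Ainf ⊆ H := (hAinfsub 0).trans (hAH 0)
  have hmemAinf : ∀ z, (∀ n, z ∈ A n) → z ∈ Ainf := fun z h => Set.mem_iInter.2 h
  -- stabilization on finite sets
  have hstab : ∀ F : Set α, F.Finite → ∃ N, ∀ n, N ≤ n → ∀ z ∈ F, z ∈ A n → z ∈ Ainf := by
    intro F hF
    have : ∀ z : α, ∃ N, z ∉ Ainf → z ∉ A N := by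
      intro z
      by_cases hz : z ∈ Ainf
      · exact ⟨0, fun h => absurd hz h⟩
      · have : ∃ n, z ∉ A n := by
          refine Classical.byContradiction fun h => ?_
          push_neg at h
          exact hz (hmemAinf z h)
        obtain ⟨n, hn⟩ := this
        exact ⟨n, fun _ => hn⟩
    choose g hg using this
    obtain ⟨N, hN⟩ := (hF.image g).bddAbove
    refine ⟨N, fun n hn z hzF hzA => ?_⟩
    by_contra hz
    exact hg z hz (hmono (g z) n ((hN (Set.mem_image_of_mem g hzF)).trans hn) hzA)
  -- the matching
  set M : Set α := {z | z ∈ Ainf ∧ ∀ w ∈ Ainf, pP w = pP z → posP z ≤ posP w} with hM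
  have hMH : M ⊆ H := fun z hz => hAinfH hz.1
  have hMinjP : ∀ y ∈ M, ∀ z ∈ M, pP y = pP z → y = z := by
    intro y hy z hz hpq
    have h1 := hy.2 z hz.1 hpq.symm
    have h2 := hz.2 y hy.1 hpq
    exact hinjP y (hMH hy) z (hMH hz) hpq (le_antisymm h1 h2)
  -- q-side injectivity helper
  have hMinjQaux : ∀ y ∈ M, ∀ z ∈ M, pQ y = pQ z → posQ y < posQ z → False := by
    intro y hy z hz hpq hlt
    obtain ⟨N, hN⟩ := hstab {w | w ∈ H ∧ pP w = pP z} (hfinP z (hMH hz))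
    have hzAN : z ∈ A N := hAinfsub N hz.1
    have hyA : y ∈ A (N+1) := hAinfsub (N+1) hy.1
    rw [hAsucc N] at hyA
    refine hyA.2 ⟨z, hzAN, ?_, hpq.symm, hlt⟩
    intro w hw hpw
    exact hz.2 w (hN N le_rfl w ⟨hAH N hw, hpw⟩ hw) hpw
  have hMinjQ : ∀ y ∈ M, ∀ z ∈ M, pQ y = pQ z → y = z := by
    intro y hy z hz hpq
    rcases lt_trichotomy (posQ y) (posQ z) with h | h | h
    · exact absurd (hMinjQaux y hy z hz hpq h) (fun x => x)
    · exact hinjQ y (hMH hy) z (hMH hz) hpq h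
    · exact absurd (hMinjQaux z hz y hy hpq.symm h) (fun x => x)
  -- extraction of a rejection
  have reject : ∀ z₁ ∈ H, z₁ ∉ Ainf → ∃ j, z₁ ∈ A j ∧ ∃ y, y ∈ A j ∧
      (∀ w ∈ A j, pP w = pP y → posP y ≤ posP w) ∧ pQ y = pQ z₁ ∧ posQ z₁ < posQ y := by
    intro z₁ hz₁ hA
    haveI : DecidablePred fun n => z₁ ∉ A n := fun n => Classical.propDecidable _
    have hex : ∃ n', z₁ ∉ A n' := by
      by_contra h; push_neg at h; exact hA (hmemAinf z₁ h)
    have hj0 : Nat.find hex ≠ 0 := by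
      intro h
      have := Nat.find_spec hex
      rw [h, hA0] at this
      exact this hz₁
    obtain ⟨j, hj⟩ := Nat.exists_eq_succ_of_ne_zero hj0
    have hzj : z₁ ∈ A j := by
      have := Nat.find_min hex (m := j) (by omega)
      simpa using this
    have hnot : z₁ ∉ A (j+1) := by
      have := Nat.find_spec hex
      rwa [hj] at this
    rw [hAsucc j] at hnot
    simp only [Set.mem_setOf_eq, not_and, not_not] at hnot
    obtain ⟨y, hy1, hy2⟩ := hnot hzj
    exact ⟨j, hzj, y, hy1, hy2⟩
  set T : α → Set α := fun z => {y | y ∈ H ∧ pQ y = pQ z ∧ posQ z < posQ y} with hT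
  have hTfin : ∀ z ∈ H, (T z).Finite := by
    intro z hz
    exact (hfinQ z hz).subset (fun w hw => ⟨hw.1, hw.2.1⟩)
  -- key lemma by strong induction on the number of q-better hits
  have key : ∀ k : ℕ, ∀ z₁ ∈ H, (T z₁).ncard ≤ k →
      (∃ n, z₁ ∈ A n ∧ ∀ w ∈ A n, pP w = pP z₁ → posP z₁ ≤ posP w) →
      ∃ m ∈ M, pQ m = pQ z₁ ∧ posQ z₁ ≤ posQ m := by
    intro k
    induction k using Nat.strong_induction_on with
    | _ k ih =>
      rintro z₁ hz₁ hcard ⟨n, hzn, hmin⟩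
      by_cases hA : z₁ ∈ Ainf
      · exact ⟨z₁, ⟨hA, fun w hw hpw => hmin w (hAinfsub n hw) hpw⟩, rfl, le_rfl⟩
      · obtain ⟨j, hzj, y, hyA, hymin, hypq, hylt⟩ := reject z₁ hz₁ hA
        have hyH := hAH j hyA
        have hss : T y ⊂ T z₁ := by
          constructor
          · intro w hw
            exact ⟨hw.1, hw.2.1.trans hypq, lt_trans hylt hw.2.2⟩
          · intro hcon
            have : y ∈ T y := hcon ⟨hyH, hypq, hylt⟩
            exact lt_irrefl _ this.2.2
        have hltc : (T y).ncard < (T z₁).ncard := Set.ncard_lt_ncard hss (hTfin z₁ hz₁)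
        obtain ⟨m, hmM, hmq, hmle⟩ := ih (T y).ncard (lt_of_lt_of_le hltc hcard) y hyH le_rfl
          ⟨j, hyA, hymin⟩
        exact ⟨m, hmM, hmq.trans hypq, le_trans (le_of_lt hylt) hmle⟩
  refine ⟨M, hMH, hMinjP, hMinjQ, ?_⟩
  intro z hz
  by_cases hA : z ∈ Ainf
  · left
    have hfib : {y | y ∈ Ainf ∧ pP y = pP z}.Finite :=
      (hfinP z hz).subset (fun w hw => ⟨hAinfH hw.1, hw.2⟩)
    obtain ⟨m, hm, hmle⟩ := Set.exists_min_image _ posP hfib ⟨z, hA, rfl⟩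
    refine ⟨m, ⟨hm.1, fun w hw hpw => hmle w ⟨hw, hpw.trans hm.2⟩⟩, hm.2, hmle z ⟨hA, rfl⟩⟩
  · right
    obtain ⟨j, hzj, y, hyA, hymin, hypq, hylt⟩ := reject z hz hA
    have hyH := hAH j hyA
    obtain ⟨m, hmM, hmq, hmle⟩ := key (T y).ncard y hyH le_rfl ⟨j, hyA, hymin⟩
    exact ⟨m, hmM, hmq.trans hypq, le_trans (le_of_lt hylt) hmle⟩

end Matching
set_option linter.unusedSectionVars false
section Lists
variable {α : Type u} [DecidableEq α]

def posIn (l : List α) (z : α) : ℕ := (l.takeWhile (fun y => decide (y ≠ z))).length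

lemma tw_append_dw (l : List α) (z : α) :
    l.takeWhile (fun y => decide (y ≠ z)) ++ l.dropWhile (fun y => decide (y ≠ z)) = l :=
  List.takeWhile_append_dropWhile

lemma mem_of_ne_of_mem_cons {a z : α} {t : List α} (h : z ∈ a :: t) (ha : a ≠ z) : z ∈ t :=
  (List.mem_cons.1 h).resolve_left (fun h' => ha h'.symm)

lemma dw_eq_cons {l : List α} {z : α} (h : z ∈ l) :
    ∃ t, l.dropWhile (fun y => decide (y ≠ z)) = z :: t := by
  induction l with
  | nil => cases h
  | cons a t ih =>
    by_cases ha : a = z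
    · subst ha; exact ⟨t, by simp [List.dropWhile_cons]⟩
    · rw [List.dropWhile_cons]
      simpa [ha] using ih (mem_of_ne_of_mem_cons h ha)

lemma getLast_mem_dw {l : List α} (hne : l ≠ []) {z : α} (hz : z ∈ l) :
    l.getLast hne ∈ l.dropWhile (fun y => decide (y ≠ z)) := by
  obtain ⟨t, ht⟩ := dw_eq_cons hz
  have h1 : l.getLast? = some (l.getLast hne) := List.getLast_mem_getLast? hne
  conv at h1 => lhs; rw [← tw_append_dw l z]
  rw [List.getLast?_append, ht] at h1
  have h2 : (z :: t).getLast? = some ((z :: t).getLast (by simp)) :=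
    List.getLast_mem_getLast? (by simp)
  rw [h2] at h1
  simp only [Option.or] at h1
  rw [ht]
  have := Option.some.inj h1
  rw [← this]
  exact List.getLast_mem _
lemma posIn_cons_self (a : α) (t : List α) : posIn (a :: t) a = 0 := by
  simp [posIn, List.takeWhile_cons]

lemma posIn_cons_ne {a x : α} (t : List α) (h : a ≠ x) :
    posIn (a :: t) x = posIn t x + 1 := by
  simp [posIn, List.takeWhile_cons, h]

lemma tw_cons_self (a : α) (t : List α) :
    (a :: t).takeWhile (fun y => decide (y ≠ a)) = [] := by
  simp [List.takeWhile_cons]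

lemma tw_cons_ne {a z : α} (t : List α) (h : a ≠ z) :
    (a :: t).takeWhile (fun y => decide (y ≠ z)) =
      a :: t.takeWhile (fun y => decide (y ≠ z)) := by
  simp [List.takeWhile_cons, h]


lemma mem_tw_iff {l : List α} {z : α} (x : α) (h : z ∈ l) :
    x ∈ l.takeWhile (fun y => decide (y ≠ z)) ↔ posIn l x < posIn l z := by
  induction l with
  | nil => cases h
  | cons a t ih =>
    by_cases ha : a = z
    · subst ha
      rw [tw_cons_self, posIn_cons_self]
      simp
    · rw [tw_cons_ne t ha, posIn_cons_ne t ha]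
      by_cases hx : x = a
      · subst hx
        rw [posIn_cons_self]
        simp
      · rw [posIn_cons_ne t (fun h' => hx h'.symm)]
        rw [List.mem_cons]
        have := ih (mem_of_ne_of_mem_cons h ha)
        constructor
        · rintro (h' | h')
          · exact absurd h' hx
          · have := this.1 h'
            omega
        · intro h'
          right
          exact this.2 (by omega)

lemma posIn_inj {l : List α} {x z : α} (hx : x ∈ l) (hz : z ∈ l) (h : posIn l x = posIn l z) :
    x = z := by
  induction l with
  | nil => cases hx
  | cons a t ih =>
    by_cases hxa : a = x <;> by_cases hza : a = z
    · exact hxa.symm.trans hza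
    · exfalso
      rw [← hxa, posIn_cons_self, posIn_cons_ne t hza] at h
      omega
    · exfalso
      rw [← hza, posIn_cons_self, posIn_cons_ne t hxa] at h
      omega
    · rw [posIn_cons_ne t hxa, posIn_cons_ne t hza] at h
      exact ih (mem_of_ne_of_mem_cons hx hxa) (mem_of_ne_of_mem_cons hz hza) (by omega)

lemma mem_dw_iff {l : List α} (hl : l.Nodup) {z : α} (x : α) (h : z ∈ l) :
    x ∈ l.dropWhile (fun y => decide (y ≠ z)) ↔ x ∈ l ∧ posIn l z ≤ posIn l x := by
  have hsplit := tw_append_dw l z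
  have hdisj : ∀ y, y ∈ l.takeWhile (fun y => decide (y ≠ z)) →
      y ∈ l.dropWhile (fun y => decide (y ≠ z)) → False := by
    have := hsplit ▸ hl
    rw [List.nodup_append] at this
    exact fun y h1 h2 => this.2.2 y h1 y h2 rfl
  constructor
  · intro hx
    have hxl : x ∈ l := by rw [← hsplit]; exact List.mem_append_right _ hx
    refine ⟨hxl, ?_⟩
    by_contra hlt
    exact hdisj x ((mem_tw_iff x h).2 (by omega)) hx
  · rintro ⟨hxl, hle⟩
    have : x ∈ l.takeWhile (fun y => decide (y ≠ z)) ∨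
        x ∈ l.dropWhile (fun y => decide (y ≠ z)) := by
      rw [← List.mem_append, hsplit]; exact hxl
    rcases this with h' | h'
    · exact absurd ((mem_tw_iff x h).1 h') (by omega)
    · exact h'

lemma mem_of_mem_tw {l : List α} {z x : α}
    (h : x ∈ l.takeWhile (fun y => decide (y ≠ z))) : x ∈ l :=
  ((l.takeWhile_sublist _).mem h)

lemma mem_of_mem_dw {l : List α} {z x : α}
    (h : x ∈ l.dropWhile (fun y => decide (y ≠ z))) : x ∈ l :=
  ((l.dropWhile_sublist _).mem h)

lemma not_self_mem_tw {l : List α} {z : α} :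
    z ∉ l.takeWhile (fun y => decide (y ≠ z)) := by
  intro h
  have := List.mem_takeWhile_imp h
  simp at this

-- consecutive pairs of a suffix are consecutive pairs of the whole
lemma zip_tail_cons (l : List α) (a : α) {e : α × α} (h : e ∈ l.zip l.tail) :
    e ∈ (a :: l).zip l := by
  cases l with
  | nil => simp at h
  | cons c t => exact List.mem_cons_of_mem _ h

lemma zip_tail_append (A : List α) {B : List α} {e : α × α} (h : e ∈ B.zip B.tail) :
    e ∈ (A ++ B).zip (A ++ B).tail := by
  induction A with
  | nil => simpa using h
  | cons a A ih =>
    have := zip_tail_cons (A ++ B) a ih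
    simpa using this

lemma getLast?_zip_tail_cons {l : List α} (a : α) (h : 2 ≤ l.length) :
    ((a :: l).zip l).getLast? = (l.zip l.tail).getLast? := by
  match l with
  | c :: d :: t =>
    rw [List.zip_cons_cons, List.zip_cons_cons, List.getLast?_cons_cons]
    rfl

lemma getLast?_zip_tail_append (A : List α) {B : List α} (h : 2 ≤ B.length) :
    ((A ++ B).zip (A ++ B).tail).getLast? = (B.zip B.tail).getLast? := by
  induction A with
  | nil => simp
  | cons a A ih =>
    have hlen : 2 ≤ (A ++ B).length := by simp; omega
    calc ((a :: (A ++ B)).zip (a :: (A ++ B)).tail).getLast?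
        = ((A ++ B).zip (A ++ B).tail).getLast? := by
          exact getLast?_zip_tail_cons a hlen
      _ = (B.zip B.tail).getLast? := ih

lemma head_mem_of_chain' {D : Set (α × α)} {l : List α} (hc : List.Chain' (fun a b => (a, b) ∈ D) l)
    {x : α} (hx : x ∈ l) (hroot : ∀ u, (u, x) ∉ D) : l.head? = some x := by
  induction l with
  | nil => cases hx
  | cons a t ih =>
    rcases List.mem_cons.1 hx with h | h
    · rw [h]
      rfl
    · cases t with
      | nil => cases h
      | cons b t' =>
        have hbt := ih (List.isChain_cons_cons.1 hc).2 h
        have hb : b = x := by simpa using hbt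
        exact absurd ((List.isChain_cons_cons.1 hc).1) (hb ▸ hroot a)


lemma splice_head {l m : List α} (hl : l ≠ []) {z : α} (hzm : z ∈ m) :
    (l.takeWhile (fun y => decide (y ≠ z)) ++ m.dropWhile (fun y => decide (y ≠ z))).head?
      = l.head? := by
  obtain ⟨a, t, rfl⟩ := List.exists_cons_of_ne_nil hl
  by_cases ha : a = z
  · subst ha
    rw [tw_cons_self]
    obtain ⟨t', ht'⟩ := dw_eq_cons hzm
    rw [List.nil_append, ht']
    rfl
  · rw [tw_cons_ne t ha]
    simp

lemma splice_last {l m : List α} {z : α} (hzm : z ∈ m) :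
    (l.takeWhile (fun y => decide (y ≠ z)) ++ m.dropWhile (fun y => decide (y ≠ z))).getLast?
      = m.getLast? := by
  obtain ⟨t, ht⟩ := dw_eq_cons hzm
  conv_rhs => rw [← tw_append_dw m z]
  rw [List.getLast?_append, List.getLast?_append, ht]
  have h2 : (z :: t).getLast? = some ((z :: t).getLast (by simp)) :=
    List.getLast_mem_getLast? (by simp)
  rw [h2]
  simp only [Option.or]

lemma splice_ne {l m : List α} {z : α} (hzm : z ∈ m) :
    l.takeWhile (fun y => decide (y ≠ z)) ++ m.dropWhile (fun y => decide (y ≠ z)) ≠ [] := by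
  intro hcon
  have := (List.append_eq_nil_iff.1 hcon).2
  obtain ⟨t, ht⟩ := dw_eq_cons hzm
  rw [ht] at this
  cases this

lemma splice_nodup {l m : List α} {z : α} (hl : l.Nodup) (hm : m.Nodup)
    (hdisj : ∀ x, x ∈ l.takeWhile (fun y => decide (y ≠ z)) →
      x ∈ m.dropWhile (fun y => decide (y ≠ z)) → False) :
    (l.takeWhile (fun y => decide (y ≠ z)) ++ m.dropWhile (fun y => decide (y ≠ z))).Nodup := by
  rw [List.nodup_append]
  exact ⟨(l.takeWhile_sublist _).nodup hl, (m.dropWhile_sublist _).nodup hm, fun a ha b hb hab => hdisj a ha (hab ▸ hb)⟩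

lemma splice_chain {R : α → α → Prop} {l m : List α} {z : α} (hzl : z ∈ l) (hzm : z ∈ m)
    (hl : l.Chain' R) (hm : m.Chain' R) :
    (l.takeWhile (fun y => decide (y ≠ z)) ++ m.dropWhile (fun y => decide (y ≠ z))).Chain' R := by
  obtain ⟨t1, ht1⟩ := dw_eq_cons hzl
  obtain ⟨t2, ht2⟩ := dw_eq_cons hzm
  have h1 : (l.takeWhile (fun y => decide (y ≠ z)) ++ l.dropWhile (fun y => decide (y ≠ z))).Chain' R := by
    rw [tw_append_dw]; exact hl
  have h2 : (m.takeWhile (fun y => decide (y ≠ z)) ++ m.dropWhile (fun y => decide (y ≠ z))).Chain' R := by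
    rw [tw_append_dw]; exact hm
  dsimp only [List.Chain'] at h1 h2 ⊢
  rw [List.isChain_append] at h1 h2
  rw [List.isChain_append]
  refine ⟨h1.1, h2.2.1, ?_⟩
  intro x hx y hy
  apply h1.2.2 x hx
  rw [ht1]
  rw [ht2] at hy
  simpa using hy

lemma splice_lastEdge {l m : List α} {z : α} (hzm : z ∈ m) (hmne : m ≠ [])
    (hzne : z ≠ m.getLast hmne) {e : α × α} (he : (m.zip m.tail).getLast? = some e) :
    e ∈ (l.takeWhile (fun y => decide (y ≠ z)) ++ m.dropWhile (fun y => decide (y ≠ z))).zip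
      ((l.takeWhile (fun y => decide (y ≠ z)) ++ m.dropWhile (fun y => decide (y ≠ z))).tail) := by
  obtain ⟨t, ht⟩ := dw_eq_cons hzm
  have hlast : m.getLast hmne ∈ m.dropWhile (fun y => decide (y ≠ z)) := getLast_mem_dw hmne hzm
  have hlen : 2 ≤ (m.dropWhile (fun y => decide (y ≠ z))).length := by
    rw [ht] at hlast ⊢
    rcases List.mem_cons.1 hlast with h | h
    · exact absurd h.symm hzne
    · cases t with
      | nil => cases h
      | cons a t' => simp
  have hz := getLast?_zip_tail_append (m.takeWhile (fun y => decide (y ≠ z))) hlen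
  rw [tw_append_dw] at hz
  rw [hz] at he
  exact zip_tail_append _ (List.mem_of_mem_getLast? (Option.mem_def.2 he))

end Lists

theorem DiPath.ext' {V : Type u} {x y : DiPath V} (h : x.verts = y.verts) : x = y := by
  cases x with
  | mk a h1 h2 =>
    cases y with
    | mk b h3 h4 =>
      simp only [mk.injEq]
      exact h


/-- A Pym-type corollary in which several paths may start at the root `r`: given a
system `P` of `S → v` paths meeting pairwise only in `{r, v}` and a `v`-infan `Q` with
`V(Q) ∩ S = V⁻(Q)`, there is such a system `R` covering `V⁻(P) ∪ E⁺(Q)`, each of whose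
paths is in `P ∪ Q` or of the form `P₀ w Q₀`. -/
theorem pym_rooted [DecidableEq V] (D : Set (V × V)) (r : V)
    (hsimple : NoLoops D) (hroot : IsRoot D r)
    (v : V) (S : Set V) (hvS : v ∉ S) (P Q : Set (DiPath V))
    (hP : ∀ p ∈ P, IsPathIn D p ∧ p.vertexSet ∩ S = {p.first} ∧ p.last = v)
    (hPdisj : ∀ p ∈ P, ∀ q ∈ P, p ≠ q → (p.vertexSet ∩ q.vertexSet) \ {v} ⊆ ({r} : Set V))
    (hQ : Infan D v Q) (hQS : vertsOf Q ∩ S = Vminus Q) :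
    ∃ R, (∀ p ∈ R, IsPathIn D p ∧ p.vertexSet ∩ S = {p.first} ∧ p.last = v) ∧
      (∀ p ∈ R, ∀ q ∈ R, p ≠ q → (p.vertexSet ∩ q.vertexSet) \ {v} ⊆ ({r} : Set V)) ∧
      Vminus P ⊆ Vminus R ∧ Eplus Q ⊆ edgesOf R ∧
      ∀ p ∈ R, p ∈ P ∪ Q ∨
        ∃ p' ∈ P, ∃ q' ∈ Q, ∃ w ∈ p'.vertexSet ∩ q'.vertexSet,
          p.verts = spliceVerts p' q' w := by
  classical
  have hPpath : ∀ p ∈ P, IsPathIn D p := fun p hp => (hP p hp).1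
  have hPS : ∀ p ∈ P, p.vertexSet ∩ S = {p.first} := fun p hp => (hP p hp).2.1
  have hPlast : ∀ p ∈ P, p.last = v := fun p hp => (hP p hp).2.2
  have hQpath : ∀ q ∈ Q, IsPathIn D q := fun q hq => (hQ.1 q hq).1
  have hQlast : ∀ q ∈ Q, q.last = v := fun q hq => (hQ.1 q hq).2
  have hfirstmem : ∀ x : DiPath V, x.first ∈ x.verts := fun x => List.head_mem x.ne
  have hPfirstS : ∀ p ∈ P, p.first ∈ S := by
    intro p hp
    have h1 : p.first ∈ ({p.first} : Set V) := rfl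
    rw [← hPS p hp] at h1
    exact h1.2
  have hQfirstS : ∀ q ∈ Q, q.first ∈ S := by
    intro q hq
    have h1 : q.first ∈ Vminus Q := ⟨q, hq, rfl⟩
    rw [← hQS] at h1
    exact h1.2
  have hQS' : ∀ q ∈ Q, q.vertexSet ∩ S = {q.first} := by
    intro q hq
    apply Set.Subset.antisymm
    · rintro x ⟨hxq, hxS⟩
      have h1 : x ∈ Vminus Q := by
        rw [← hQS]
        refine ⟨Set.mem_biUnion hq hxq, hxS⟩
      obtain ⟨q', hq', rfl⟩ := h1
      by_cases h : q' = q
      · subst h; rfl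
      · exfalso
        have h2 : q'.first ∈ q'.vertexSet ∩ q.vertexSet := ⟨hfirstmem q', hxq⟩
        rw [hQ.2 q' hq' q hq h] at h2
        exact hvS ((Set.mem_singleton_iff.1 h2) ▸ hxS)
    · intro x hx
      rw [Set.mem_singleton_iff.1 hx]
      exact ⟨hfirstmem q, hQfirstS q hq⟩
  have uniqP : ∀ x, x ≠ r → x ≠ v → ∀ p ∈ P, ∀ p' ∈ P, x ∈ p.verts → x ∈ p'.verts → p = p' := by
    intro x hxr hxv p hp p' hp' h1 h2
    by_contra hne
    have := hPdisj p hp p' hp' hne ⟨⟨h1, h2⟩, by simpa using hxv⟩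
    exact hxr (by simpa using this)
  have uniqQ : ∀ x, x ≠ v → ∀ q ∈ Q, ∀ q' ∈ Q, x ∈ q.verts → x ∈ q'.verts → q = q' := by
    intro x hxv q hq q' hq' h1 h2
    by_contra hne
    have h3 : x ∈ q.vertexSet ∩ q'.vertexSet := ⟨h1, h2⟩
    rw [hQ.2 q hq q' hq' hne] at h3
    exact hxv (by simpa using h3)
  let pP : V → DiPath V := fun x =>
    if h : ∃ p, p ∈ P ∧ x ∈ p.verts then h.choose else ⟨[v], by simp, by simp⟩
  let pQ : V → DiPath V := fun x =>
    if h : ∃ q, q ∈ Q ∧ x ∈ q.verts then h.choose else ⟨[v], by simp, by simp⟩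
  have hpP : ∀ x, (∃ p, p ∈ P ∧ x ∈ p.verts) → pP x ∈ P ∧ x ∈ (pP x).verts := by
    intro x h
    simp only [pP, dif_pos h]
    exact h.choose_spec
  have hpQ : ∀ x, (∃ q, q ∈ Q ∧ x ∈ q.verts) → pQ x ∈ Q ∧ x ∈ (pQ x).verts := by
    intro x h
    simp only [pQ, dif_pos h]
    exact h.choose_spec
  set H : Set V := {x | x ≠ r ∧ x ≠ v ∧ (∃ p, p ∈ P ∧ x ∈ p.verts) ∧ (∃ q, q ∈ Q ∧ x ∈ q.verts)}
    with hHdef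
  have hpPH : ∀ z ∈ H, pP z ∈ P ∧ z ∈ (pP z).verts := fun z hz => hpP z hz.2.2.1
  have hpQH : ∀ z ∈ H, pQ z ∈ Q ∧ z ∈ (pQ z).verts := fun z hz => hpQ z hz.2.2.2
  have hpPuniq : ∀ z ∈ H, ∀ p ∈ P, z ∈ p.verts → pP z = p := fun z hz p hp hzp =>
    uniqP z hz.1 hz.2.1 (pP z) (hpPH z hz).1 p hp (hpPH z hz).2 hzp
  have hpQuniq : ∀ z ∈ H, ∀ q ∈ Q, z ∈ q.verts → pQ z = q := fun z hz q hq hzq =>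
    uniqQ z hz.2.1 (pQ z) (hpQH z hz).1 q hq (hpQH z hz).2 hzq
  set posP : V → ℕ := fun z => posIn (pP z).verts z with hposPdef
  set posQ : V → ℕ := fun z => posIn (pQ z).verts z with hposQdef
  obtain ⟨M, hMH, hMinjP, hMinjQ, hMstab⟩ := exists_stable_matching H pP pQ posP posQ
    (fun z _ => ((pP z).verts.finite_toSet).subset (fun y hy => by
      rw [← hy.2]; exact (hpPH y hy.1).2))
    (fun z _ => ((pQ z).verts.finite_toSet).subset (fun y hy => by
      rw [← hy.2]; exact (hpQH y hy.1).2))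
    (fun y hy z hz hpq hpos => by
      refine posIn_inj (l := (pP z).verts) ?_ (hpPH z hz).2 ?_
      · rw [← hpq]; exact (hpPH y hy).2
      · simpa [hposPdef, hpq] using hpos)
    (fun y hy z hz hpq hpos => by
      refine posIn_inj (l := (pQ z).verts) ?_ (hpQH z hz).2 ?_
      · rw [← hpq]; exact (hpQH y hy).2
      · simpa [hposQdef, hpq] using hpos)
  have key_disj : ∀ z ∈ M, ∀ x, x ∈ (pP z).verts.takeWhile (fun y => decide (y ≠ z)) →
      x ∈ (pQ z).verts.dropWhile (fun y => decide (y ≠ z)) → False := by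
    intro z hzM x hxtw hxdw
    have hzH := hMH hzM
    have hp := hpPH z hzH
    have hq := hpQH z hzH
    have hxp : x ∈ (pP z).verts := mem_of_mem_tw hxtw
    have hxq : x ∈ (pQ z).verts := mem_of_mem_dw hxdw
    have hxv : x ≠ v := by
      intro h
      rw [h] at hxtw
      have hvdw : (pP z).last ∈ (pP z).verts.dropWhile (fun y => decide (y ≠ z)) :=
        getLast_mem_dw (pP z).ne hp.2
      rw [hPlast _ hp.1] at hvdw
      have hnd : ((pP z).verts.takeWhile (fun y => decide (y ≠ z)) ++
          (pP z).verts.dropWhile (fun y => decide (y ≠ z))).Nodup := by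
        rw [tw_append_dw]; exact (pP z).nodup
      exact (List.disjoint_of_nodup_append hnd) hxtw hvdw
    have hxr : x ≠ r := by
      intro h
      rw [h] at hxdw hxq
      have hhead := head_mem_of_chain' (hQpath _ hq.1) hxq (fun u => hroot u)
      obtain ⟨a, t0, ha⟩ := List.exists_cons_of_ne_nil (pQ z).ne
      rw [ha] at hhead
      have har : a = r := by simpa using hhead
      have h1 : posIn (pQ z).verts z ≤ posIn (pQ z).verts r :=
        ((mem_dw_iff (pQ z).nodup r hq.2).1 hxdw).2
      have h2 : posIn (pQ z).verts r = 0 := by rw [ha, ← har, posIn_cons_self]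
      exact hzH.1 (posIn_inj hq.2 hxq (by omega))
    have hxH : x ∈ H := ⟨hxr, hxv, ⟨pP z, hp.1, hxp⟩, ⟨pQ z, hq.1, hxq⟩⟩
    have hxpP : pP x = pP z := hpPuniq x hxH (pP z) hp.1 hxp
    have hxpQ : pQ x = pQ z := hpQuniq x hxH (pQ z) hq.1 hxq
    have hposP : posP x < posP z := by
      have := (mem_tw_iff x hp.2).1 hxtw
      simpa [hposPdef, hxpP] using this
    have hposQ : posQ z ≤ posQ x := by
      have := ((mem_dw_iff (pQ z).nodup x hq.2).1 hxdw).2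
      simpa [hposQdef, hxpQ] using this
    rcases hMstab x hxH with ⟨m, hmM, hmp, hmle⟩ | ⟨m, hmM, hmq, hmle⟩
    · have hmz : m = z := hMinjP m hmM z hzM (by rw [hmp, hxpP])
      rw [hmz] at hmle
      omega
    · have hmz : m = z := hMinjQ m hmM z hzM (by rw [hmq, hxpQ])
      rw [hmz] at hmle
      have heq : posQ x = posQ z := le_antisymm hmle hposQ
      have hxz : x = z := by
        refine posIn_inj (l := (pQ z).verts) hxq hq.2 ?_
        simpa [hposQdef, hxpQ] using heq
      rw [hxz] at hxtw
      exact not_self_mem_tw hxtw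
  have splice_mk : ∀ z ∈ M, ∃ x : DiPath V, x.verts = spliceVerts (pP z) (pQ z) z := by
    intro z hzM
    have hzH := hMH hzM
    have hq := hpQH z hzH
    refine ⟨⟨spliceVerts (pP z) (pQ z) z, ?_, ?_⟩, rfl⟩
    · unfold spliceVerts
      exact splice_ne hq.2
    · unfold spliceVerts
      exact splice_nodup (pP z).nodup (pQ z).nodup (key_disj z hzM)
  set R : Set (DiPath V) :=
    {x | (x ∈ P ∧ ¬∃ z ∈ M, pP z = x) ∨ (x ∈ Q ∧ ¬∃ z ∈ M, pQ z = x) ∨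
      (∃ z ∈ M, x.verts = spliceVerts (pP z) (pQ z) z)} with hRdef
  -- the first vertex of a splice path
  have hsplice_first : ∀ z ∈ M, ∀ x : DiPath V, x.verts = spliceVerts (pP z) (pQ z) z →
      x.first = (pP z).first := by
    intro z hzM x hxv
    have hzH := hMH hzM
    have hq := hpQH z hzH
    have h1 : x.verts.head? = some ((pP z).verts.head (pP z).ne) := by
      rw [hxv]
      unfold spliceVerts
      rw [splice_head (pP z).ne hq.2]
      exact List.head?_eq_head _
    have h2 : x.verts.head? = some x.first := List.head?_eq_head x.ne
    rw [h1] at h2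
    exact (Option.some.inj h2).symm
  -- q.first in the dropWhile part forces z = q.first
  have hqfirst_dw : ∀ z ∈ M, (pQ z).first ∈
      (pQ z).verts.dropWhile (fun y => decide (y ≠ z)) → z = (pQ z).first := by
    intro z hzM hmem
    have hzH := hMH hzM
    have hq := hpQH z hzH
    have h1 : posIn (pQ z).verts z ≤ posIn (pQ z).verts (pQ z).first :=
      ((mem_dw_iff (pQ z).nodup _ hq.2).1 hmem).2
    obtain ⟨a, t0, ha⟩ := List.exists_cons_of_ne_nil (pQ z).ne
    have hfa : (pQ z).first = a := by
      show (pQ z).verts.head _ = a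
      simp [ha]
    have h2 : posIn (pQ z).verts (pQ z).first = 0 := by rw [hfa, ha, posIn_cons_self]
    exact posIn_inj hq.2 (hfirstmem _) (by omega)
  have hR1 : ∀ x ∈ R, IsPathIn D x ∧ x.vertexSet ∩ S = {x.first} ∧ x.last = v := by
    intro x hx
    rcases hx with ⟨hxP, -⟩ | ⟨hxQ, -⟩ | ⟨z, hzM, hxv⟩
    · exact hP x hxP
    · exact ⟨hQpath x hxQ, hQS' x hxQ, hQlast x hxQ⟩
    · have hzH := hMH hzM
      have hp := hpPH z hzH
      have hq := hpQH z hzH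
      refine ⟨?_, ?_, ?_⟩
      · show List.Chain' (fun a b => (a, b) ∈ D) x.verts
        rw [hxv]
        unfold spliceVerts
        exact splice_chain hp.2 hq.2 (hPpath _ hp.1) (hQpath _ hq.1)
      · -- the S-condition
        by_cases hzq1 : z = (pQ z).first
        · -- the splice is just pQ z
          have hzS : z ∈ S := hzq1 ▸ hQfirstS _ hq.1
          have hzp1 : z = (pP z).first := by
            have h3 : z ∈ (pP z).vertexSet ∩ S := ⟨hp.2, hzS⟩
            rw [hPS _ hp.1] at h3
            exact Set.mem_singleton_iff.1 h3
          have hxq2 : x.verts = (pQ z).verts := by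
            rw [hxv]
            unfold spliceVerts
            obtain ⟨a, t, ha⟩ := List.exists_cons_of_ne_nil (pP z).ne
            have haz : a = z := by
              rw [hzp1]
              show a = (pP z).verts.head _
              simp [ha]
            obtain ⟨b, t2, hb⟩ := List.exists_cons_of_ne_nil (pQ z).ne
            have hbz : b = z := by
              rw [hzq1]
              show b = (pQ z).verts.head _
              simp [hb]
            rw [ha, haz, tw_cons_self, hb, List.dropWhile_cons]
            simp [hbz]
          have hxeq : x = pQ z := DiPath.ext' hxq2
          rw [hxeq]
          exact hQS' _ hq.1
        · have hfst : x.first = (pP z).first := hsplice_first z hzM x hxv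
          apply Set.Subset.antisymm
          · rintro y ⟨hyx, hyS⟩
            have hy2 : y ∈ (pP z).verts.takeWhile (fun w => decide (w ≠ z)) ∨
                y ∈ (pQ z).verts.dropWhile (fun w => decide (w ≠ z)) := by
              have : y ∈ x.verts := hyx
              rw [hxv] at this
              unfold spliceVerts at this
              exact List.mem_append.1 this
            rcases hy2 with hy2 | hy2
            · have : y ∈ (pP z).vertexSet ∩ S := ⟨mem_of_mem_tw hy2, hyS⟩
              rw [hPS _ hp.1] at this
              rw [Set.mem_singleton_iff.1 this, Set.mem_singleton_iff, hfst]
            · exfalso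
              have h3 : y ∈ (pQ z).vertexSet ∩ S := ⟨mem_of_mem_dw hy2, hyS⟩
              rw [hQS' _ hq.1] at h3
              rw [Set.mem_singleton_iff.1 h3] at hy2
              exact hzq1 (hqfirst_dw z hzM hy2)
          · intro y hy
            rw [Set.mem_singleton_iff.1 hy]
            exact ⟨hfirstmem x, hfst ▸ hPfirstS _ hp.1⟩
      · -- last vertex is v
        have h1 : x.verts.getLast? = (pQ z).verts.getLast? := by
          rw [hxv]
          unfold spliceVerts
          exact splice_last hq.2
        have h2 : x.verts.getLast? = some x.last := List.getLast_mem_getLast? x.ne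
        have h3 : (pQ z).verts.getLast? = some (pQ z).last := List.getLast_mem_getLast? (pQ z).ne
        rw [h1, h3] at h2
        rw [← Option.some.inj h2]
        exact hQlast _ hq.1
  have block : ∀ w, w ≠ r → w ≠ v → ∀ p ∈ P, w ∈ p.verts → ∀ q ∈ Q, w ∈ q.verts →
      (∀ z ∈ M, pP z = p → posIn p.verts w < posIn p.verts z) →
      (∀ z ∈ M, pQ z = q → posIn q.verts z ≤ posIn q.verts w) → False := by
    intro w hwr hwv p hp hwp q hq hwq hside1 hside2
    have hwH : w ∈ H := ⟨hwr, hwv, ⟨p, hp, hwp⟩, ⟨q, hq, hwq⟩⟩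
    have hwpP : pP w = p := hpPuniq w hwH p hp hwp
    have hwpQ : pQ w = q := hpQuniq w hwH q hq hwq
    rcases hMstab w hwH with ⟨m, hmM, hmp, hmle⟩ | ⟨m, hmM, hmq, hmle⟩
    · have hmp' : pP m = p := by rw [hmp, hwpP]
      have h1 := hside1 m hmM hmp'
      have h2 : posIn p.verts m ≤ posIn p.verts w := by
        simpa [hposPdef, hmp', hwpP] using hmle
      omega
    · have hmq' : pQ m = q := by rw [hmq, hwpQ]
      have h1 := hside2 m hmM hmq'
      have h2 : posIn q.verts w ≤ posIn q.verts m := by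
        simpa [hposQdef, hmq', hwpQ] using hmle
      have h3 : posIn q.verts w = posIn q.verts m := le_antisymm h2 h1
      have hwm : w = m := by
        refine posIn_inj (l := q.verts) hwq ?_ h3
        rw [← hmq']
        exact (hpQH m (hMH hmM)).2
      have hwM : w ∈ M := hwm ▸ hmM
      have := hside1 w hwM hwpP
      omega
  have hchar : ∀ x ∈ R, ∀ w, w ∈ x.verts → w ≠ r → w ≠ v →
      (∃ p ∈ P, w ∈ p.verts ∧
        (∀ z ∈ M, pP z = p → posIn p.verts w < posIn p.verts z) ∧
        ((x = p ∧ ¬∃ z ∈ M, pP z = p) ∨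
          ∃ z0 ∈ M, pP z0 = p ∧ x.verts = spliceVerts (pP z0) (pQ z0) z0)) ∨
      (∃ q ∈ Q, w ∈ q.verts ∧
        (∀ z ∈ M, pQ z = q → posIn q.verts z ≤ posIn q.verts w) ∧
        ((x = q ∧ ¬∃ z ∈ M, pQ z = q) ∨
          ∃ z0 ∈ M, pQ z0 = q ∧ x.verts = spliceVerts (pP z0) (pQ z0) z0)) := by
    intro x hx w hwx hwr hwv
    rcases hx with ⟨hxP, hxum⟩ | ⟨hxQ, hxum⟩ | ⟨z0, hz0M, hxv⟩
    · left
      refine ⟨x, hxP, hwx, ?_, Or.inl ⟨rfl, hxum⟩⟩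
      intro z hzM hzp
      exact absurd ⟨z, hzM, hzp⟩ hxum
    · right
      refine ⟨x, hxQ, hwx, ?_, Or.inl ⟨rfl, hxum⟩⟩
      intro z hzM hzq
      exact absurd ⟨z, hzM, hzq⟩ hxum
    · have hz0H := hMH hz0M
      have hp := hpPH z0 hz0H
      have hq := hpQH z0 hz0H
      have hw2 : w ∈ (pP z0).verts.takeWhile (fun y => decide (y ≠ z0)) ∨
          w ∈ (pQ z0).verts.dropWhile (fun y => decide (y ≠ z0)) := by
        rw [hxv] at hwx
        unfold spliceVerts at hwx
        exact List.mem_append.1 hwx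
      rcases hw2 with hw2 | hw2
      · left
        refine ⟨pP z0, hp.1, mem_of_mem_tw hw2, ?_, Or.inr ⟨z0, hz0M, rfl, hxv⟩⟩
        intro z hzM hzp
        have hzz : z = z0 := hMinjP z hzM z0 hz0M hzp
        rw [hzz]
        exact (mem_tw_iff w hp.2).1 hw2
      · right
        refine ⟨pQ z0, hq.1, mem_of_mem_dw hw2, ?_, Or.inr ⟨z0, hz0M, rfl, hxv⟩⟩
        intro z hzM hzq
        have hzz : z = z0 := hMinjQ z hzM z0 hz0M hzq
        rw [hzz]
        exact ((mem_dw_iff (pQ z0).nodup w hq.2).1 hw2).2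
  have main : ∀ x ∈ R, ∀ y ∈ R, x ≠ y → ∀ w, w ∈ x.verts → w ∈ y.verts → w = r ∨ w = v := by
    intro x hx y hy hne w hwx hwy
    by_contra hcon
    push_neg at hcon
    obtain ⟨hwr, hwv⟩ := hcon
    rcases hchar x hx w hwx hwr hwv with ⟨p1, hp1, hwp1, hside1, htag1⟩ |
      ⟨q1, hq1, hwq1, hside1, htag1⟩ <;>
      rcases hchar y hy w hwy hwr hwv with ⟨p2, hp2, hwp2, hside2, htag2⟩ |
        ⟨q2, hq2, hwq2, hside2, htag2⟩
    · by_cases hpp : p1 = p2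
      · subst hpp
        rcases htag1 with ⟨hxe, hxum⟩ | ⟨z0, hz0, hz0p, hz0v⟩ <;>
          rcases htag2 with ⟨hye, hyum⟩ | ⟨z1, hz1, hz1p, hz1v⟩
        · exact hne (hxe.trans hye.symm)
        · exact hxum ⟨z1, hz1, hz1p⟩
        · exact hyum ⟨z0, hz0, hz0p⟩
        · have hzz : z0 = z1 := hMinjP z0 hz0 z1 hz1 (by rw [hz0p, hz1p])
          exact hne (DiPath.ext' (by rw [hz0v, hz1v, hzz]))
      · exact hwr (by simpa using hPdisj p1 hp1 p2 hp2 hpp ⟨⟨hwp1, hwp2⟩, by simpa using hwv⟩)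
    · exact block w hwr hwv p1 hp1 hwp1 q2 hq2 hwq2 hside1 hside2
    · exact block w hwr hwv p2 hp2 hwp2 q1 hq1 hwq1 hside2 hside1
    · by_cases hqq : q1 = q2
      · subst hqq
        rcases htag1 with ⟨hxe, hxum⟩ | ⟨z0, hz0, hz0p, hz0v⟩ <;>
          rcases htag2 with ⟨hye, hyum⟩ | ⟨z1, hz1, hz1p, hz1v⟩
        · exact hne (hxe.trans hye.symm)
        · exact hxum ⟨z1, hz1, hz1p⟩
        · exact hyum ⟨z0, hz0, hz0p⟩
        · have hzz : z0 = z1 := hMinjQ z0 hz0 z1 hz1 (by rw [hz0p, hz1p])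
          exact hne (DiPath.ext' (by rw [hz0v, hz1v, hzz]))
      · have h3 : w ∈ q1.vertexSet ∩ q2.vertexSet := ⟨hwq1, hwq2⟩
        rw [hQ.2 q1 hq1 q2 hq2 hqq] at h3
        exact hwv (Set.mem_singleton_iff.1 h3)
  refine ⟨R, hR1, ?_, ?_, ?_, ?_⟩
  · -- pairwise disjointness
    intro x hx y hy hne
    rintro w ⟨⟨hwx, hwy⟩, hwv⟩
    rcases main x hx y hy hne w hwx hwy with h | h
    · exact h
    · exact absurd h (by simpa using hwv)
  · -- Vminus P ⊆ Vminus R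
    rintro s ⟨p, hp, rfl⟩
    by_cases hm : ∃ z ∈ M, pP z = p
    · obtain ⟨z, hzM, hzp⟩ := hm
      obtain ⟨x, hxv⟩ := splice_mk z hzM
      refine ⟨x, Or.inr (Or.inr ⟨z, hzM, hxv⟩), ?_⟩
      rw [hsplice_first z hzM x hxv, hzp]
    · exact ⟨p, Or.inl ⟨hp, hm⟩, rfl⟩
  · -- Eplus Q ⊆ edgesOf R
    rintro e ⟨q, hq, he⟩
    by_cases hm : ∃ z ∈ M, pQ z = q
    · obtain ⟨z, hzM, hzq⟩ := hm
      obtain ⟨x, hxv⟩ := splice_mk z hzM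
      have hzH := hMH hzM
      have hqz := hpQH z hzH
      refine Set.mem_biUnion (Or.inr (Or.inr ⟨z, hzM, hxv⟩) : x ∈ R) ?_
      show e ∈ x.verts.zip x.verts.tail
      rw [hxv]
      unfold spliceVerts
      rw [← hzq] at he
      refine splice_lastEdge hqz.2 (pQ z).ne ?_ he
      have : (pQ z).verts.getLast (pQ z).ne = v := hQlast _ hqz.1
      rw [this]
      exact hzH.2.1
    · refine Set.mem_biUnion (Or.inr (Or.inl ⟨hq, hm⟩) : q ∈ R) ?_
      exact List.mem_of_mem_getLast? (Option.mem_def.2 he)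
  · -- description of the paths of R
    intro x hx
    rcases hx with ⟨hxP, -⟩ | ⟨hxQ, -⟩ | ⟨z, hzM, hxv⟩
    · exact Or.inl (Set.mem_union_left _ hxP)
    · exact Or.inl (Set.mem_union_right _ hxQ)
    · have hzH := hMH hzM
      have hp := hpPH z hzH
      have hq := hpQH z hzH
      exact Or.inr ⟨pP z, hp.1, pQ z, hq.1, z, ⟨hp.2, hq.2⟩, hxv⟩
end
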